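/- arXiv:2508.08391 — 9 statements merged into one kernel-verified Lean document; each statement's English description precedes it below -/
import Mathlib

section
/- Let M be a finite loopless matroid of rank r+1, let L(M) be its lattice of flats with Möbius function μ and minimal element ⊥. For every k with 0 ≤ k ≤ r, the signed coefficient of the reduced characteristic polynomial is nonnegative: (−1)^{k+1} · Σ_{F ∈ L(M), rk(F) ≥ k+1} μ(⊥, F) ≥ 0. -/
open scoped Classical

/-- The rank of a set `X` in a matroid `M`: the largest cardinality of an independent subset
of `X`. -/
noncomputable def matroidRk {α : Type*} (M : Matroid α) (X : Set α) : ℕ :=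
  sSup {k : ℕ | ∃ I : Set α, M.Indep I ∧ I ⊆ X ∧ I.ncard = k}

namespace RedCharAux

open Finset Set Matroid

variable {α : Type*} [Fintype α] {M : Matroid α} {I J X Y F G : Set α} {e : α}

lemma ncard_le_of_indep_subset (hI : M.Indep I) (hIX : I ⊆ X) (hJ : M.IsBasis' J X) :
    I.ncard ≤ J.ncard := by
  by_contra h
  push_neg at h
  obtain ⟨e, he, hi⟩ := hJ.indep.augment hI (by
    rw [← (Set.toFinite J).cast_ncard_eq, ← (Set.toFinite I).cast_ncard_eq]
    exact_mod_cast h)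
  exact hJ.insert_not_indep ⟨hIX he.1, he.2⟩ hi

lemma rk_eq_ncard (hJ : M.IsBasis' J X) : matroidRk M X = J.ncard := by
  apply IsGreatest.csSup_eq
  refine ⟨⟨J, hJ.indep, hJ.subset, rfl⟩, ?_⟩
  rintro k ⟨I, hI, hIX, rfl⟩
  exact ncard_le_of_indep_subset hI hIX hJ

lemma rk_mono (h : X ⊆ Y) : matroidRk M X ≤ matroidRk M Y := by
  obtain ⟨I, hI⟩ := M.exists_isBasis' X
  obtain ⟨J, hJ⟩ := M.exists_isBasis' Y
  rw [rk_eq_ncard hI, rk_eq_ncard hJ]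
  exact ncard_le_of_indep_subset hI.indep (hI.subset.trans h) hJ

lemma rk_closure (X : Set α) : matroidRk M (M.closure X) = matroidRk M X := by
  obtain ⟨I, hI⟩ := M.exists_isBasis' X
  have h2 : M.IsBasis I (M.closure X) := (isBasis'_iff_isBasis_closure.1 hI).1
  rw [rk_eq_ncard hI, rk_eq_ncard h2.isBasis']

lemma rk_empty : matroidRk M (∅ : Set α) = 0 := by
  obtain ⟨I, hI⟩ := M.exists_isBasis' (∅ : Set α)
  rw [rk_eq_ncard hI]
  have : I = ∅ := Set.subset_empty_iff.1 hI.subset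
  simp [this]

lemma closure_flat' (M : Matroid α) (X : Set α) : M.IsFlat (M.closure X) := by
  rw [Matroid.closure_def]
  have hne : ({F | M.IsFlat F ∧ X ∩ M.E ⊆ F} : Set (Set α)).Nonempty :=
    ⟨M.E, M.ground_isFlat, Set.inter_subset_right⟩
  rw [Set.sInter_eq_iInter]
  have := hne.coe_sort
  exact Matroid.IsFlat.iInter (fun F => F.2.1)

lemma rk_insert_le (X : Set α) (e : α) :
    matroidRk M (insert e X) ≤ matroidRk M X + 1 := by
  obtain ⟨J, hJ⟩ := M.exists_isBasis' (insert e X)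
  obtain ⟨I, hI⟩ := M.exists_isBasis' X
  rw [rk_eq_ncard hJ, rk_eq_ncard hI]
  have h1 : J \ {e} ⊆ X := by
    intro x hx
    rcases hJ.subset hx.1 with h | h
    · exact absurd h hx.2
    · exact h
  have h2 : (J \ {e}).ncard ≤ I.ncard :=
    ncard_le_of_indep_subset (hJ.indep.subset diff_subset) h1 hI
  have h3 : J.ncard ≤ (J \ {e}).ncard + 1 := by
    calc J.ncard ≤ (insert e (J \ {e})).ncard :=
          Set.ncard_le_ncard (Set.subset_insert_diff_singleton e J) (Set.toFinite _)
      _ ≤ (J \ {e}).ncard + 1 := Set.ncard_insert_le _ _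
  omega

lemma rk_lt_of_flat_ssubset (hF : M.IsFlat F) (hG : G ⊆ M.E) (hFG : F ⊂ G) :
    matroidRk M F < matroidRk M G := by
  obtain ⟨e, heG, heF⟩ := exists_of_ssubset hFG
  obtain ⟨I, hI⟩ := M.exists_isBasis F hF.subset_ground
  have hcl : M.closure I = F := by rw [hI.closure_eq_closure, hF.closure]
  have heI : e ∉ I := fun h => heF (hI.subset h)
  have hind : M.Indep (insert e I) := by
    rw [hI.indep.insert_indep_iff_of_notMem heI]
    exact ⟨hG heG, fun h => heF (hcl ▸ h)⟩
  obtain ⟨J, hJ⟩ := M.exists_isBasis' G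
  have h1 : (insert e I).ncard ≤ J.ncard :=
    ncard_le_of_indep_subset hind (insert_subset heG (hI.subset.trans hFG.subset)) hJ
  rw [rk_eq_ncard hI.isBasis', rk_eq_ncard hJ]
  rw [Set.ncard_insert_of_notMem heI (Set.toFinite I)] at h1
  omega

lemma flat_eq_empty_of_rk_zero (hloopless : M.closure ∅ = ∅) (hF : M.IsFlat F)
    (h : matroidRk M F = 0) : F = ∅ := by
  by_contra hne
  have hflat0 : M.IsFlat (∅ : Set α) := hloopless ▸ closure_flat' M ∅
  have : matroidRk M (∅ : Set α) < matroidRk M F :=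
    rk_lt_of_flat_ssubset hflat0 hF.subset_ground
      (ssubset_of_ne_of_subset (Ne.symm hne) (empty_subset F))
  rw [rk_empty] at this
  omega



lemma sum_filter_congr' {p q : Set α → Prop} {ip : DecidablePred p} {iq : DecidablePred q}
    (h : ∀ x, p x ↔ q x) (μ : Set α → ℤ) :
    ∑ x ∈ @Finset.filter _ p ip Finset.univ, μ x
      = ∑ x ∈ @Finset.filter _ q iq Finset.univ, μ x := by
  refine Finset.sum_congr ?_ fun _ _ => rfl
  ext x
  simp only [Finset.mem_filter, Finset.mem_univ, true_and]
  exact h x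

lemma sum_sum_filter_congr {p q : Set α → Prop} {ip : DecidablePred p} {iq : DecidablePred q}
    {f g : Set α → Set α → Prop} {jf : ∀ z, DecidablePred (f z)}
    {jg : ∀ z, DecidablePred (g z)}
    (hpq : ∀ x, p x ↔ q x) (hfg : ∀ z x, f z x ↔ g z x) (μ : Set α → ℤ) :
    ∑ z ∈ @Finset.filter _ p ip Finset.univ,
        ∑ x ∈ @Finset.filter _ (f z) (jf z) Finset.univ, μ x
      = ∑ z ∈ @Finset.filter _ q iq Finset.univ,
        ∑ x ∈ @Finset.filter _ (g z) (jg z) Finset.univ, μ x := by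
  have h1 : @Finset.filter _ p ip Finset.univ = @Finset.filter _ q iq Finset.univ := by
    ext x; simp only [Finset.mem_filter, Finset.mem_univ, true_and]; exact hpq x
  rw [h1]
  exact Finset.sum_congr rfl fun z _ => sum_filter_congr' (hfg z) μ

/-- regrouping a sum over a fibration -/
lemma sum_fiber {P Q : Set α → Prop} {g : Set α → Set α} (h : ∀ x, P x → Q (g x))
    (μ : Set α → ℤ) :
    ∑ z ∈ Finset.univ.filter Q,
      ∑ x ∈ Finset.univ.filter (fun x => P x ∧ g x = z), μ x
      = ∑ x ∈ Finset.univ.filter P, μ x := by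
  have := Finset.sum_fiberwise_of_maps_to (s := Finset.univ.filter P)
    (t := Finset.univ.filter Q) (g := g)
    (fun x hx => by
      simp only [Finset.mem_filter, Finset.mem_univ, true_and] at hx ⊢
      exact h x hx) μ
  rw [← this]
  exact Finset.sum_congr rfl fun z _ => by rw [Finset.filter_filter]

section Moebius

variable (μ : Set α → ℤ)

/-- Weisner-type vanishing: for a flat `z` containing a non-loop `e`, the sum of `μ` over
flats `x` with `closure (insert e x) = z` vanishes. -/
lemma weisner (hμ : ∀ F : Set α, M.IsFlat F → F ≠ ∅ →
      ∑ G ∈ Finset.univ.filter (fun G : Set α => M.IsFlat G ∧ G ⊆ F), μ G = 0)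
    (he : e ∈ M.E) :
    ∀ z : Set α, M.IsFlat z → e ∈ z →
      ∑ x ∈ Finset.univ.filter
        (fun x : Set α => M.IsFlat x ∧ M.closure (insert e x) = z), μ x = 0 := by
  have main : ∀ n : ℕ, ∀ z : Set α, z.ncard = n → M.IsFlat z → e ∈ z →
      ∑ x ∈ Finset.univ.filter
        (fun x : Set α => M.IsFlat x ∧ M.closure (insert e x) = z), μ x = 0 := by
    intro n
    induction n using Nat.strong_induction_on with
    | _ n IH =>
      intro z hzn hz hez
      have hsub : ∀ x : Set α, M.IsFlat x → x ⊆ M.closure (insert e x) :=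
        fun x hx => (subset_insert e x).trans
          (M.subset_closure _ (insert_subset he hx.subset_ground))
      have hmaps : ∀ x : Set α, (M.IsFlat x ∧ x ⊆ z) →
          (M.IsFlat (M.closure (insert e x)) ∧ e ∈ M.closure (insert e x) ∧
            M.closure (insert e x) ⊆ z) := by
        intro x hx
        refine ⟨closure_flat' M _, M.mem_closure_of_mem' (mem_insert _ _) he, ?_⟩
        rw [← hz.closure]
        exact M.closure_subset_closure (insert_subset hez hx.2)
      have key := sum_fiber (P := fun x : Set α => M.IsFlat x ∧ x ⊆ z)
        (Q := fun z' : Set α => M.IsFlat z' ∧ e ∈ z' ∧ z' ⊆ z)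
        (g := fun x => M.closure (insert e x)) hmaps μ
      have key' : ∑ z' ∈ Finset.univ.filter (fun z' : Set α =>
          M.IsFlat z' ∧ e ∈ z' ∧ z' ⊆ z),
          ∑ x ∈ Finset.univ.filter
            (fun x : Set α => (M.IsFlat x ∧ x ⊆ z) ∧ M.closure (insert e x) = z'), μ x = 0 :=
        ((sum_sum_filter_congr (fun _ => Iff.rfl) (fun _ _ => Iff.rfl) μ).trans
          (key.trans (sum_filter_congr' (fun _ => Iff.rfl) μ))).trans
          (hμ z hz (Set.nonempty_iff_ne_empty.1 ⟨e, hez⟩))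
      have hinner : ∀ z' ∈ Finset.univ.filter (fun z' : Set α =>
          M.IsFlat z' ∧ e ∈ z' ∧ z' ⊆ z),
          ∑ x ∈ Finset.univ.filter
            (fun x : Set α => (M.IsFlat x ∧ x ⊆ z) ∧ M.closure (insert e x) = z'), μ x
          = ∑ x ∈ Finset.univ.filter
            (fun x : Set α => M.IsFlat x ∧ M.closure (insert e x) = z'), μ x := by
        intro z' hz'
        simp only [Finset.mem_filter, Finset.mem_univ, true_and] at hz'
        refine Finset.sum_congr ?_ fun _ _ => rfl
        ext x
        simp only [Finset.mem_filter, Finset.mem_univ, true_and]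
        constructor
        · rintro ⟨⟨h1, _⟩, h3⟩; exact ⟨h1, h3⟩
        · rintro ⟨h1, h3⟩
          exact ⟨⟨h1, (hsub x h1).trans (h3 ▸ hz'.2.2)⟩, h3⟩
      rw [Finset.sum_congr rfl hinner] at key'
      have hzt : z ∈ Finset.univ.filter (fun z' : Set α =>
          M.IsFlat z' ∧ e ∈ z' ∧ z' ⊆ z) := by
        simp only [Finset.mem_filter, Finset.mem_univ, true_and]
        exact ⟨hz, hez, subset_rfl⟩
      rw [← Finset.add_sum_erase _ _ hzt] at key'
      have hrest : ∀ z' ∈ (Finset.univ.filter (fun z' : Set α =>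
          M.IsFlat z' ∧ e ∈ z' ∧ z' ⊆ z)).erase z,
          ∑ x ∈ Finset.univ.filter
            (fun x : Set α => M.IsFlat x ∧ M.closure (insert e x) = z'), μ x = 0 := by
        intro z' hz'
        have hne := Finset.ne_of_mem_erase hz'
        have hz'' := Finset.mem_of_mem_erase hz'
        simp only [Finset.mem_filter, Finset.mem_univ, true_and] at hz''
        have hlt : z'.ncard < n := by
          rw [← hzn]
          exact Set.ncard_lt_ncard (ssubset_of_ne_of_subset hne hz''.2.2) (Set.toFinite z)
        exact IH _ hlt z' rfl hz''.1 hz''.2.1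
      rw [Finset.sum_eq_zero hrest, add_zero] at key'
      exact key'
  exact fun z => main z.ncard z rfl

/-- Rota's sign theorem, weak form. -/
lemma rota (hloopless : M.closure ∅ = ∅) (hμ0 : μ (∅ : Set α) = 1)
    (hμ : ∀ F : Set α, M.IsFlat F → F ≠ ∅ →
      ∑ G ∈ Finset.univ.filter (fun G : Set α => M.IsFlat G ∧ G ⊆ F), μ G = 0) :
    ∀ F : Set α, M.IsFlat F → 0 ≤ (-1 : ℤ) ^ (matroidRk M F) * μ F := by
  have main : ∀ n : ℕ, ∀ F : Set α, F.ncard = n → M.IsFlat F →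
      0 ≤ (-1 : ℤ) ^ (matroidRk M F) * μ F := by
    intro n
    induction n using Nat.strong_induction_on with
    | _ n IH =>
      intro F hFn hF
      rcases eq_empty_or_nonempty F with rfl | ⟨e, heF⟩
      · rw [hμ0]
        have : matroidRk M (∅ : Set α) = 0 := rk_empty
        simp [this]
      have he : e ∈ M.E := hF.subset_ground heF
      have hN := weisner μ hμ he F hF heF
      set S := Finset.univ.filter
        (fun x : Set α => M.IsFlat x ∧ M.closure (insert e x) = F) with hS
      have hFS : F ∈ S := by
        simp only [hS, Finset.mem_filter, Finset.mem_univ, true_and]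
        exact ⟨hF, by rw [insert_eq_of_mem heF, hF.closure]⟩
      rw [← Finset.add_sum_erase _ _ hFS] at hN
      have hμF : μ F = - ∑ x ∈ S.erase F, μ x := by linarith
      have hx_facts : ∀ x ∈ S.erase F, M.IsFlat x ∧ x ⊂ F ∧
          matroidRk M F = matroidRk M x + 1 := by
        intro x hx
        have hne := Finset.ne_of_mem_erase hx
        have hx' := Finset.mem_of_mem_erase hx
        simp only [hS, Finset.mem_filter, Finset.mem_univ, true_and] at hx'
        have hxF : x ⊆ F := by
          rw [← hx'.2]
          exact (subset_insert e x).trans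
            (M.subset_closure _ (insert_subset he hx'.1.subset_ground))
        have hss : x ⊂ F := ssubset_of_ne_of_subset hne hxF
        have h1 : matroidRk M x < matroidRk M F :=
          rk_lt_of_flat_ssubset hx'.1 hF.subset_ground hss
        have h2 : matroidRk M F ≤ matroidRk M x + 1 := by
          rw [← hx'.2, rk_closure]
          exact rk_insert_le x e
        exact ⟨hx'.1, hss, by omega⟩
      have h3 : (-1 : ℤ) ^ (matroidRk M F) * μ F
          = ∑ x ∈ S.erase F, (-1 : ℤ) ^ (matroidRk M x) * μ x := by
        rw [hμF, mul_neg, Finset.mul_sum, ← Finset.sum_neg_distrib]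
        refine Finset.sum_congr rfl fun x hx => ?_
        rw [(hx_facts x hx).2.2, pow_succ]
        ring
      rw [h3]
      refine Finset.sum_nonneg fun x hx => ?_
      obtain ⟨hxflat, hss, _⟩ := hx_facts x hx
      exact IH x.ncard (hFn ▸ Set.ncard_lt_ncard hss (Set.toFinite F)) x rfl hxflat
  exact fun F hF => main F.ncard F rfl hF

/-- Key step identity. -/
lemma step (hμ : ∀ F : Set α, M.IsFlat F → F ≠ ∅ →
      ∑ G ∈ Finset.univ.filter (fun G : Set α => M.IsFlat G ∧ G ⊆ F), μ G = 0)
    (he : e ∈ M.E) (k : ℕ) :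
    ∑ x ∈ Finset.univ.filter
        (fun x : Set α => M.IsFlat x ∧ e ∉ x ∧ matroidRk M x = k), μ x
    + ∑ G ∈ Finset.univ.filter
        (fun G : Set α => M.IsFlat G ∧ e ∈ G ∧ matroidRk M G = k + 1), μ G = 0 := by
  have hsub : ∀ x : Set α, M.IsFlat x → x ⊆ M.closure (insert e x) :=
    fun x hx => (subset_insert e x).trans
      (M.subset_closure _ (insert_subset he hx.subset_ground))
  have hmaps : ∀ x : Set α, (M.IsFlat x ∧ e ∉ x ∧ matroidRk M x = k) →
      (M.IsFlat (M.closure (insert e x)) ∧ e ∈ M.closure (insert e x) ∧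
        matroidRk M (M.closure (insert e x)) = k + 1) := by
    intro x hx
    have hss : x ⊂ M.closure (insert e x) := by
      refine ssubset_of_ne_of_subset (fun h => hx.2.1 ?_) (hsub x hx.1)
      rw [h]; exact M.mem_closure_of_mem' (mem_insert _ _) he
    have h1 : matroidRk M x < matroidRk M (M.closure (insert e x)) :=
      rk_lt_of_flat_ssubset hx.1 (M.closure_subset_ground _) hss
    have h2 : matroidRk M (M.closure (insert e x)) ≤ matroidRk M x + 1 := by
      rw [rk_closure]; exact rk_insert_le x e
    exact ⟨closure_flat' M _, M.mem_closure_of_mem' (mem_insert _ _) he, by omega⟩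
  have h1 := sum_fiber (P := fun x : Set α => M.IsFlat x ∧ e ∉ x ∧ matroidRk M x = k)
      (Q := fun G : Set α => M.IsFlat G ∧ e ∈ G ∧ matroidRk M G = k + 1)
      (g := fun x => M.closure (insert e x)) hmaps μ
  have h1' : ∑ G ∈ Finset.univ.filter
      (fun G : Set α => M.IsFlat G ∧ e ∈ G ∧ matroidRk M G = k + 1),
      ∑ x ∈ Finset.univ.filter
        (fun x : Set α => (M.IsFlat x ∧ e ∉ x ∧ matroidRk M x = k) ∧
          M.closure (insert e x) = G), μ x
      = ∑ x ∈ Finset.univ.filter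
          (fun x : Set α => M.IsFlat x ∧ e ∉ x ∧ matroidRk M x = k), μ x :=
    (sum_sum_filter_congr (fun _ => Iff.rfl) (fun _ _ => Iff.rfl) μ).trans
      (h1.trans (sum_filter_congr' (fun _ => Iff.rfl) μ))
  set T := Finset.univ.filter
    (fun G : Set α => M.IsFlat G ∧ e ∈ G ∧ matroidRk M G = k + 1) with hT
  have h0 : ∑ G ∈ T, (∑ x ∈ Finset.univ.filter
      (fun x : Set α => M.IsFlat x ∧ M.closure (insert e x) = G), μ x) = 0 := by
    refine Finset.sum_eq_zero fun G hG => ?_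
    simp only [hT, Finset.mem_filter, Finset.mem_univ, true_and] at hG
    exact weisner μ hμ he G hG.1 hG.2.1
  have hfib : ∀ G ∈ T,
      ∑ x ∈ Finset.univ.filter
        (fun x : Set α => M.IsFlat x ∧ M.closure (insert e x) = G), μ x
      = μ G + ∑ x ∈ Finset.univ.filter
        (fun x : Set α => (M.IsFlat x ∧ e ∉ x ∧ matroidRk M x = k) ∧
          M.closure (insert e x) = G), μ x := by
    intro G hG
    simp only [hT, Finset.mem_filter, Finset.mem_univ, true_and] at hG
    have hset : Finset.univ.filter
        (fun x : Set α => M.IsFlat x ∧ M.closure (insert e x) = G)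
        = insert G (Finset.univ.filter
          (fun x : Set α => (M.IsFlat x ∧ e ∉ x ∧ matroidRk M x = k) ∧
            M.closure (insert e x) = G)) := by
      ext x
      simp only [Finset.mem_insert, Finset.mem_filter, Finset.mem_univ, true_and]
      constructor
      · rintro ⟨hxf, hxc⟩
        by_cases hex : e ∈ x
        · left
          rw [insert_eq_of_mem hex, hxf.closure] at hxc
          exact hxc
        · right
          have hxG : x ⊆ G := hxc ▸ hsub x hxf
          have hss : x ⊂ G := ssubset_of_ne_of_subset
            (fun h => hex (h ▸ hG.2.1)) hxG
          have hlt : matroidRk M x < matroidRk M G :=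
            rk_lt_of_flat_ssubset hxf hG.1.subset_ground hss
          have hle : matroidRk M G ≤ matroidRk M x + 1 := by
            rw [← hxc, rk_closure]; exact rk_insert_le x e
          exact ⟨⟨hxf, hex, by omega⟩, hxc⟩
      · rintro (rfl | ⟨⟨h1, _, _⟩, h4⟩)
        · exact ⟨hG.1, by rw [insert_eq_of_mem hG.2.1, hG.1.closure]⟩
        · exact ⟨h1, h4⟩
    have hGnot : G ∉ Finset.univ.filter
        (fun x : Set α => (M.IsFlat x ∧ e ∉ x ∧ matroidRk M x = k) ∧
          M.closure (insert e x) = G) := by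
      simp only [Finset.mem_filter, Finset.mem_univ, true_and]
      rintro ⟨⟨_, hex, _⟩, _⟩
      exact hex hG.2.1
    rw [hset, Finset.sum_insert hGnot]
  rw [Finset.sum_congr rfl hfib, Finset.sum_add_distrib, h1'] at h0
  linarith

end Moebius

end RedCharAux

/-- let `M` be a finite loopless matroid of rank `r+1` and let `μ` be the Möbius
function of its lattice of flats based at the minimal flat `⊥ = closure ∅` (characterized by
`μ ⊥ = 1` and `Σ_{G ⊆ F} μ G = 0` for every flat `F ≠ ⊥`). Then for every `0 ≤ k ≤ r` the signed
coefficient of the reduced characteristic polynomial is nonnegative: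
`(−1)^{k+1} · Σ_{F flat, rk F ≥ k+1} μ F ≥ 0`. -/
theorem reduced_char_coeff_nonneg {α : Type*} [Fintype α] (M : Matroid α) (r : ℕ)
    (hloopless : M.closure ∅ = ∅)
    (hrank : matroidRk M M.E = r + 1)
    (μ : Set α → ℤ)
    (hμ0 : μ (M.closure ∅) = 1)
    (hμ : ∀ F : Set α, M.IsFlat F → F ≠ M.closure ∅ →
      ∑ G ∈ Finset.univ.filter (fun G : Set α => M.IsFlat G ∧ G ⊆ F), μ G = 0) :
    ∀ k : ℕ, k ≤ r →
      0 ≤ (-1) ^ (k + 1) *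
        ∑ F ∈ Finset.univ.filter (fun F : Set α => M.IsFlat F ∧ k + 1 ≤ matroidRk M F), μ F := by
  classical
  rw [hloopless] at hμ0 hμ
  open RedCharAux in
  -- ground set is nonempty
  have hE : M.E.Nonempty := by
    rw [Set.nonempty_iff_ne_empty]
    intro h
    rw [h, RedCharAux.rk_empty] at hrank
    omega
  obtain ⟨e, he⟩ := hE
  -- partial-sum identity
  have b_id : ∀ k : ℕ,
      ∑ F ∈ Finset.univ.filter (fun F : Set α => M.IsFlat F ∧ matroidRk M F ≤ k), μ F
      = ∑ F ∈ Finset.univ.filter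
          (fun F : Set α => M.IsFlat F ∧ e ∉ F ∧ matroidRk M F = k), μ F := by
    intro k
    induction k with
    | zero =>
      refine Finset.sum_congr ?_ fun _ _ => rfl
      ext F
      simp only [Finset.mem_filter, Finset.mem_univ, true_and]
      constructor
      · rintro ⟨h1, h2⟩
        have h0 : matroidRk M F = 0 := by omega
        have := RedCharAux.flat_eq_empty_of_rk_zero hloopless h1 h0
        subst this
        exact ⟨h1, fun h => h.elim, h0⟩
      · rintro ⟨h1, _, h3⟩
        exact ⟨h1, by omega⟩
    | succ k ih =>
      have e1 : ∑ F ∈ Finset.univ.filter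
            (fun F : Set α => M.IsFlat F ∧ matroidRk M F ≤ k + 1), μ F
          = ∑ F ∈ Finset.univ.filter
              (fun F : Set α => M.IsFlat F ∧ matroidRk M F ≤ k), μ F
          + ∑ F ∈ Finset.univ.filter
              (fun F : Set α => M.IsFlat F ∧ matroidRk M F = k + 1), μ F := by
        rw [← Finset.sum_filter_add_sum_filter_not (Finset.univ.filter
          (fun F : Set α => M.IsFlat F ∧ matroidRk M F ≤ k + 1))
          (fun F => matroidRk M F ≤ k) μ]
        congr 1 <;>
        · refine Finset.sum_congr ?_ fun _ _ => rfl
          ext F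
          simp only [Finset.mem_filter, Finset.mem_univ, true_and]
          constructor
          · rintro ⟨⟨h1, h2⟩, h3⟩; exact ⟨h1, by omega⟩
          · rintro ⟨h1, h2⟩; exact ⟨⟨h1, by omega⟩, by omega⟩
      have e2 : ∑ F ∈ Finset.univ.filter
            (fun F : Set α => M.IsFlat F ∧ matroidRk M F = k + 1), μ F
          = ∑ F ∈ Finset.univ.filter
              (fun F : Set α => M.IsFlat F ∧ e ∈ F ∧ matroidRk M F = k + 1), μ F
          + ∑ F ∈ Finset.univ.filter
              (fun F : Set α => M.IsFlat F ∧ e ∉ F ∧ matroidRk M F = k + 1), μ F := by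
        rw [← Finset.sum_filter_add_sum_filter_not (Finset.univ.filter
          (fun F : Set α => M.IsFlat F ∧ matroidRk M F = k + 1))
          (fun F => e ∈ F) μ]
        congr 1 <;>
        · refine Finset.sum_congr ?_ fun _ _ => rfl
          ext F
          simp only [Finset.mem_filter, Finset.mem_univ, true_and]
          tauto
      have hstep := RedCharAux.step μ hμ he k
      rw [e1, e2, ih]
      linarith
  intro k _
  -- total sum of μ over flats is zero
  have total : ∑ F ∈ Finset.univ.filter (fun F : Set α => M.IsFlat F), μ F = 0 := by
    have h1 := hμ M.E M.ground_isFlat (Set.nonempty_iff_ne_empty.1 ⟨e, he⟩)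
    rw [← h1]
    refine Finset.sum_congr ?_ fun _ _ => rfl
    ext F
    simp only [Finset.mem_filter, Finset.mem_univ, true_and]
    exact ⟨fun h => ⟨h, h.subset_ground⟩, fun h => h.1⟩
  have hsplit : ∑ F ∈ Finset.univ.filter
        (fun F : Set α => M.IsFlat F ∧ k + 1 ≤ matroidRk M F), μ F
      = - ∑ F ∈ Finset.univ.filter
          (fun F : Set α => M.IsFlat F ∧ matroidRk M F ≤ k), μ F := by
    have h2 := Finset.sum_filter_add_sum_filter_not
      (Finset.univ.filter (fun F : Set α => M.IsFlat F))
      (fun F => matroidRk M F ≤ k) μ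
    rw [total] at h2
    have h3 : (Finset.univ.filter (fun F : Set α => M.IsFlat F)).filter
        (fun F => matroidRk M F ≤ k)
        = Finset.univ.filter (fun F : Set α => M.IsFlat F ∧ matroidRk M F ≤ k) := by
      rw [Finset.filter_filter]
    have h4 : (Finset.univ.filter (fun F : Set α => M.IsFlat F)).filter
        (fun F => ¬ matroidRk M F ≤ k)
        = Finset.univ.filter (fun F : Set α => M.IsFlat F ∧ k + 1 ≤ matroidRk M F) := by
      rw [Finset.filter_filter]
      refine Finset.filter_congr fun F _ => ?_
      constructor
      · rintro ⟨h1, h2⟩; exact ⟨h1, by omega⟩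
      · rintro ⟨h1, h2⟩; exact ⟨h1, by omega⟩
    rw [h3, h4] at h2
    linarith
  rw [hsplit, b_id k]
  have hfin : (-1 : ℤ) ^ (k + 1) * - ∑ F ∈ Finset.univ.filter
        (fun F : Set α => M.IsFlat F ∧ e ∉ F ∧ matroidRk M F = k), μ F
      = ∑ F ∈ Finset.univ.filter
          (fun F : Set α => M.IsFlat F ∧ e ∉ F ∧ matroidRk M F = k),
          (-1 : ℤ) ^ (matroidRk M F) * μ F := by
    rw [mul_neg, Finset.mul_sum, ← Finset.sum_neg_distrib]
    refine Finset.sum_congr rfl fun F hF => ?_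
    simp only [Finset.mem_filter, Finset.mem_univ, true_and] at hF
    rw [hF.2.2, pow_succ]
    ring
  rw [hfin]
  refine Finset.sum_nonneg fun F hF => ?_
  simp only [Finset.mem_filter, Finset.mem_univ, true_and] at hF
  exact RedCharAux.rota μ hloopless hμ0 hμ F hF.1
end

section
/- For every finite simple graph Γ there exists a polynomial p with integer coefficients such that for every natural number n, the evaluation p(n) equals the number of proper colorings of Γ with n colors. -/
open Finset Polynomial

/-- Functions constant along a relation correspond to functions on the quotient. -/
def constOnEquiv {α β : Type*} (r : α → α → Prop) :
    {f : α → β // ∀ a b, r a b → f a = f b} ≃ (Quot r → β) where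
  toFun f := Quot.lift f.1 f.2
  invFun g := ⟨g ∘ Quot.mk r, fun a b h => congrArg g (Quot.sound h)⟩
  left_inv f := rfl
  right_inv g := funext fun q => by induction q using Quot.ind; rfl

/-- Number of "components" of a set of edges. -/
noncomputable def comps {V : Type*} (S : Finset (Sym2 V)) : ℕ :=
  Nat.card (Quot (fun a b : V => s(a, b) ∈ S))

lemma card_const_on {V : Type*} [Finite V] (S : Finset (Sym2 V)) (n : ℕ) :
    Nat.card {f : V → Fin n // ∀ a b : V, s(a, b) ∈ S → f a = f b} = n ^ comps S := by
  have : Finite (Quot (fun a b : V => s(a, b) ∈ S)) := Quot.finite _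
  rw [Nat.card_congr (constOnEquiv _), Nat.card_fun, Nat.card_eq_fintype_card (α := Fin n),
    Fintype.card_fin, comps]

/-- For every finite simple graph `Γ` there exists a polynomial `p` with integer
coefficients such that for every natural number `n`, the evaluation `p(n)` equals the number of
proper colorings of `Γ` with `n` colors. -/
theorem chromatic_polynomial_exists {V : Type*} [Fintype V] (Γ : SimpleGraph V) :
    ∃ p : Polynomial ℤ, ∀ n : ℕ, p.eval (n : ℤ) = Nat.card (Γ.Coloring (Fin n)) := by
  classical
  refine ⟨∑ S ∈ Γ.edgeFinset.powerset, (-1 : ℤ) ^ S.card • X ^ comps S, fun n => ?_⟩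
  -- Colorings as a subtype of functions
  have hcol : Nat.card (Γ.Coloring (Fin n)) =
      Nat.card {f : V → Fin n // ∀ a b, Γ.Adj a b → f a ≠ f b} := by
    refine Nat.card_congr ⟨fun c => ⟨c, fun a b h => c.valid h⟩,
      fun f => SimpleGraph.Coloring.mk f.1 (fun {a b} h => f.2 a b h), fun c => rfl, fun f => rfl⟩
  -- Monochromatic edge set of a function
  set Bad : (V → Fin n) → Finset (Sym2 V) := fun f =>
    Γ.edgeFinset.filter (fun e => ∀ a b : V, e = s(a, b) → f a = f b) with hBad
  have hBadE : ∀ f, Bad f ⊆ Γ.edgeFinset := fun f => filter_subset _ _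
  -- properness iff Bad empty
  have hiff : ∀ f : V → Fin n, (∀ a b, Γ.Adj a b → f a ≠ f b) ↔ Bad f = ∅ := by
    intro f
    rw [eq_empty_iff_forall_notMem]
    constructor
    · intro hP e he
      rw [hBad, mem_filter] at he
      obtain ⟨heE, hmono⟩ := he
      induction e using Sym2.ind with
      | _ a b =>
        exact hP a b (Γ.mem_edgeSet.mp (SimpleGraph.mem_edgeFinset.mp heE)) (hmono a b rfl)
    · intro h a b hadj hfab
      refine h s(a, b) ?_
      rw [hBad, mem_filter]
      refine ⟨SimpleGraph.mem_edgeFinset.mpr (Γ.mem_edgeSet.mpr hadj), fun a' b' he => ?_⟩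
      rcases Sym2.eq_iff.mp he with ⟨ha, hb⟩ | ⟨ha, hb⟩ <;> subst ha <;> subst hb
      · exact hfab
      · exact hfab.symm
  -- main computation
  have hcount : (Nat.card (Γ.Coloring (Fin n)) : ℤ) =
      ∑ f : V → Fin n, if Bad f = ∅ then (1 : ℤ) else 0 := by
    rw [hcol, Nat.card_eq_fintype_card, Fintype.card_subtype]
    rw [← Finset.sum_boole]
    exact Finset.sum_congr rfl fun f _ => if_congr (hiff f) rfl rfl
  rw [hcount]
  have hstep : ∀ f : V → Fin n, (if Bad f = ∅ then (1 : ℤ) else 0) =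
      ∑ S ∈ Γ.edgeFinset.powerset, if S ⊆ Bad f then (-1 : ℤ) ^ S.card else 0 := by
    intro f
    rw [← Finset.sum_filter]
    have hps : Γ.edgeFinset.powerset.filter (fun S => S ⊆ Bad f) = (Bad f).powerset := by
      ext S
      simp only [mem_filter, mem_powerset]
      exact ⟨fun h => h.2, fun h => ⟨h.trans (hBadE f), h⟩⟩
    rw [hps, Finset.sum_powerset_neg_one_pow_card]
  rw [Finset.sum_congr rfl fun f _ => hstep f, Finset.sum_comm]
  rw [eval_finset_sum]
  refine Finset.sum_congr rfl fun S hS => ?_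
  rw [mem_powerset] at hS
  -- fix S; count f with S ⊆ Bad f
  have hsub : ∀ f : V → Fin n, S ⊆ Bad f ↔ ∀ a b : V, s(a, b) ∈ S → f a = f b := by
    intro f
    constructor
    · intro h a b hab
      have := h hab
      rw [hBad, mem_filter] at this
      exact this.2 a b rfl
    · intro h e he
      rw [hBad, mem_filter]
      refine ⟨hS he, fun a b hab => h a b (hab ▸ he)⟩
  have hcard : ((Finset.univ.filter (fun f : V → Fin n => S ⊆ Bad f)).card : ℤ) =
      (n : ℤ) ^ comps S := by
    have : (Finset.univ.filter (fun f : V → Fin n => S ⊆ Bad f)).card =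
        Nat.card {f : V → Fin n // ∀ a b : V, s(a, b) ∈ S → f a = f b} := by
      rw [Nat.card_eq_fintype_card, Fintype.card_subtype]
      exact (Finset.card_bij (fun f _ => f) (fun f hf => by
        simp only [mem_filter, mem_univ, true_and] at hf ⊢
        exact (hsub f).mp hf) (fun _ _ _ _ h => h) (fun f hf => ⟨f, by
        simp only [mem_filter, mem_univ, true_and] at hf ⊢
        exact (hsub f).mpr hf, rfl⟩))
    rw [this, card_const_on]
    push_cast
    ring
  calc ((-1 : ℤ) ^ S.card • X ^ comps S : Polynomial ℤ).eval (n : ℤ)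
      = ((Finset.univ.filter (fun f : V → Fin n => S ⊆ Bad f)).card : ℤ) * (-1 : ℤ) ^ S.card := by
        simp [hcard, mul_comm]
    _ = ∑ f ∈ Finset.univ.filter (fun f : V → Fin n => S ⊆ Bad f), (-1 : ℤ) ^ S.card := by
        rw [Finset.sum_const, nsmul_eq_mul]
    _ = ∑ f : V → Fin n, (if S ⊆ Bad f then (-1 : ℤ) ^ S.card else 0) := by
        rw [Finset.sum_filter]
end

section
/- Let E be a finite set and let L be a collection of subsets of E such that E ∈ L and L is closed under pairwise intersection. Then the following two conditions are equivalent: (F3) for every F ∈ L, if F₁, …, F_k are the minimal members of L properly containing F, then the sets F₁∖F, …, F_k∖F form a partition of E∖F (they are pairwise disjoint, nonempty, and their union is E∖F); (F3′) for every F ∈ L and every i ∈ E∖F, there exists G ∈ L that covers F (i.e. G is a minimal member of L properly containing F) and contains i. -/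
/-- `G` is a minimal member of `L` properly containing `F` (i.e. `G` covers `F` in `L`). -/
def CoversIn {α : Type*} (L : Set (Set α)) (F G : Set α) : Prop :=
  G ∈ L ∧ F ⊂ G ∧ ¬∃ H ∈ L, F ⊂ H ∧ H ⊂ G

/-- Let `E` be a finite set (the universe of the fintype `α`) and `L` a collection
of subsets of `E` with `E ∈ L` which is closed under pairwise intersection. Then the flat
partition axiom (F3) is equivalent to the covering axiom (F3′). -/
theorem partition_axiom_iff_cover_axiom {α : Type*} [Fintype α] (L : Set (Set α))
    (hE : Set.univ ∈ L) (hInt : ∀ F₁ ∈ L, ∀ F₂ ∈ L, F₁ ∩ F₂ ∈ L) :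
    (∀ F ∈ L,
        (∀ G₁ G₂ : Set α, CoversIn L F G₁ → CoversIn L F G₂ → G₁ ≠ G₂ →
          Disjoint (G₁ \ F) (G₂ \ F)) ∧
        (∀ G : Set α, CoversIn L F G → (G \ F).Nonempty) ∧
        (⋃ G ∈ {G : Set α | CoversIn L F G}, G \ F) = Set.univ \ F)
      ↔
    (∀ F ∈ L, ∀ i ∉ F, ∃ G : Set α, CoversIn L F G ∧ i ∈ G) := by
  constructor
  · intro h F hF i hi
    obtain ⟨-, -, hu⟩ := h F hF
    have hmem : i ∈ Set.univ \ F := ⟨trivial, hi⟩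
    rw [← hu] at hmem
    simp only [Set.mem_iUnion, Set.mem_setOf_eq, Set.mem_diff] at hmem
    obtain ⟨G, hG, hiG, -⟩ := hmem
    exact ⟨G, hG, hiG⟩
  · intro h F hF
    refine ⟨?_, ?_, ?_⟩
    · intro G₁ G₂ h₁ h₂ hne
      rw [Set.disjoint_left]
      rintro i ⟨hi1, hiF⟩ ⟨hi2, -⟩
      have hI : G₁ ∩ G₂ ∈ L := hInt _ h₁.1 _ h₂.1
      have hsub : F ⊂ G₁ ∩ G₂ := by
        refine ⟨Set.subset_inter h₁.2.1.1 h₂.2.1.1, fun hc => hiF (hc ⟨hi1, hi2⟩)⟩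
      have e1 : G₁ ∩ G₂ = G₁ := by
        by_contra hc
        exact h₁.2.2 ⟨G₁ ∩ G₂, hI, hsub, Set.inter_subset_left.ssubset_of_ne hc⟩
      have e2 : G₁ ∩ G₂ = G₂ := by
        by_contra hc
        exact h₂.2.2 ⟨G₁ ∩ G₂, hI, hsub, Set.inter_subset_right.ssubset_of_ne hc⟩
      exact hne (e1 ▸ e2)
    · intro G hG
      obtain ⟨x, hxG, hxF⟩ := Set.exists_of_ssubset hG.2.1
      exact ⟨x, hxG, hxF⟩
    · ext i
      simp only [Set.mem_iUnion, Set.mem_setOf_eq, Set.mem_diff, Set.mem_univ, true_and]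
      constructor
      · rintro ⟨G, hG, -, hiF⟩
        exact hiF
      · intro hiF
        obtain ⟨G, hG, hiG⟩ := h F hF i hiF
        exact ⟨G, hG, hiG, hiF⟩
end

section
/- Let E be a finite set with |E| ≥ 2 and let c : 𝒫(E) → ℝ be strictly submodular, i.e. c(∅) = 0, c(E) = 0, and c(I₁) + c(I₂) > c(I₁ ∩ I₂) + c(I₁ ∪ I₂) for all incomparable subsets I₁, I₂ with ∅ ⊊ I₁, I₂ ⊊ E. Then there exists a function m : E → ℝ with Σ_{i ∈ E} m(i) = 0 such that the modified function c′(I) := c(I) + Σ_{i ∈ I} m(i) satisfies c′(I) ≥ 0 for every subset I ⊆ E, and c′(I) > 0 for at least one subset I. -/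
/-- Let `E` be a finite set with `|E| ≥ 2` and let `c` be a strictly submodular
real-valued function on the subsets of `E`. Then there is a function `m : E → ℝ` with
`Σ_{i ∈ E} m(i) = 0` such that `c′(I) := c(I) + Σ_{i ∈ I} m(i)` is nonnegative on every subset
`I ⊆ E` and strictly positive on at least one subset. -/
theorem strictly_submodular_effective {α : Type*} [Fintype α] [DecidableEq α]
    (hcard : 2 ≤ Fintype.card α)
    (c : Finset α → ℝ) (h0 : c ∅ = 0) (hE : c Finset.univ = 0)
    (hsub : ∀ I₁ I₂ : Finset α, ¬I₁ ⊆ I₂ → ¬I₂ ⊆ I₁ →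
      ∅ ⊂ I₁ → I₁ ⊂ Finset.univ → ∅ ⊂ I₂ → I₂ ⊂ Finset.univ →
      c (I₁ ∩ I₂) + c (I₁ ∪ I₂) < c I₁ + c I₂) :
    ∃ m : α → ℝ, (∑ i, m i) = 0 ∧
      (∀ I : Finset α, 0 ≤ c I + ∑ i ∈ I, m i) ∧
      (∃ I : Finset α, 0 < c I + ∑ i ∈ I, m i) := by
  classical
  set n := Fintype.card α with hn
  set e : α ≃ Fin n := Fintype.equivFin α with he
  set seg : ℕ → Finset α := fun k => Finset.univ.filter (fun i => ((e i : ℕ) < k)) with hseg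
  have mem_seg : ∀ (a : α) (k : ℕ), a ∈ seg k ↔ (e a : ℕ) < k := by
    intro a k; simp [hseg]
  have seg0 : seg 0 = ∅ := by
    ext a; simp [mem_seg]
  have segn : ∀ k, n ≤ k → seg k = Finset.univ := by
    intro k hk; ext a
    simp only [mem_seg, Finset.mem_univ, iff_true]
    exact lt_of_lt_of_le (e a).isLt hk
  have seg_succ : ∀ k (hk : k < n), seg (k+1) = insert (e.symm ⟨k, hk⟩) (seg k) := by
    intro k hk; ext a
    have h1 : a = e.symm ⟨k, hk⟩ ↔ (e a : ℕ) = k := by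
      rw [Equiv.eq_symm_apply, Fin.ext_iff]
    simp only [mem_seg, Finset.mem_insert, Nat.lt_succ_iff_lt_or_eq, h1]
    tauto
  set x : α → ℝ := fun a => c (seg ((e a : ℕ) + 1)) - c (seg (e a : ℕ)) with hx
  -- telescoping
  have tele : ∀ k, ∑ i ∈ seg k, x i = c (seg k) := by
    intro k; induction k with
    | zero => simp [seg0, h0]
    | succ k ih =>
      by_cases hk : k < n
      · have h1 : seg (k+1) = insert (e.symm ⟨k, hk⟩) (seg k) := seg_succ k hk
        have h2 : (e.symm ⟨k, hk⟩) ∉ seg k := by simp [mem_seg]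
        rw [h1, Finset.sum_insert h2, ih]
        have hea : (e (e.symm ⟨k, hk⟩) : ℕ) = k := by simp
        simp only [hx, hea]
        rw [← h1]; ring
      · have h1 : seg (k+1) = seg k := by
          rw [segn k (le_of_not_gt hk), segn (k+1) (by omega)]
        rw [h1, ih]
  -- main inequality
  have main : ∀ k, ∀ I : Finset α, I ⊆ seg k → ∑ i ∈ I, x i ≤ c I := by
    intro k; induction k with
    | zero =>
      intro I hI
      rw [seg0] at hI
      rw [Finset.subset_empty.mp hI]
      simp [h0]
    | succ k ih =>
      intro I hI
      by_cases hk : k < n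
      · set a := e.symm ⟨k, hk⟩ with ha
        have h1 : seg (k+1) = insert a (seg k) := seg_succ k hk
        have hea : (e a : ℕ) = k := by simp [ha]
        have h2 : a ∉ seg k := by simp [mem_seg, hea]
        by_cases haI : a ∈ I
        · by_cases hIeq : I = seg (k+1)
          · rw [hIeq, tele]
          · have herase : I.erase a ⊆ seg k := by
              intro i hi
              rcases Finset.mem_erase.mp hi with ⟨hia, hiI⟩
              have := hI hiI
              rw [h1, Finset.mem_insert] at this
              tauto
            have hsum : ∑ i ∈ I, x i = x a + ∑ i ∈ I.erase a, x i :=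
              (Finset.add_sum_erase I x haI).symm
            have hxa : x a = c (seg (k+1)) - c (seg k) := by
              simp only [hx, hea]
            have hIsub : ¬ I ⊆ seg k := fun h => h2 (h haI)
            have hsegI : ¬ seg k ⊆ I := by
              intro h
              apply hIeq
              apply Finset.Subset.antisymm hI
              rw [h1]
              exact Finset.insert_subset haI h
            have hIne : ∅ ⊂ I := Finset.empty_ssubset.mpr ⟨a, haI⟩
            have hIuniv : I ⊂ Finset.univ := by
              rw [Finset.ssubset_univ_iff]
              intro h
              apply hIeq
              apply Finset.Subset.antisymm hI
              rw [h]; exact Finset.subset_univ _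
            have hsegne : ∅ ⊂ seg k := by
              rw [Finset.empty_ssubset]
              rcases Finset.eq_empty_or_nonempty (seg k) with h | h
              · exfalso
                apply hIeq
                apply Finset.Subset.antisymm hI
                rw [h1, h]
                simpa using haI
              · exact h
            have hseguniv : seg k ⊂ Finset.univ := by
              rw [Finset.ssubset_univ_iff]
              intro h
              exact h2 (h ▸ Finset.mem_univ a)
            have hkey := hsub I (seg k) hIsub hsegI hIne hIuniv hsegne hseguniv
            have hint : I ∩ seg k = I.erase a := by
              ext i
              simp only [Finset.mem_inter, Finset.mem_erase]
              constructor
              · rintro ⟨hi, hik⟩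
                exact ⟨fun hia => h2 (hia ▸ hik), hi⟩
              · rintro ⟨hia, hi⟩
                refine ⟨hi, ?_⟩
                have := hI hi
                rw [h1, Finset.mem_insert] at this
                tauto
            have hun : I ∪ seg k = seg (k+1) := by
              apply Finset.Subset.antisymm
              · exact Finset.union_subset hI (by rw [h1]; exact Finset.subset_insert _ _)
              · rw [h1]
                exact Finset.insert_subset (Finset.mem_union_left _ haI)
                  Finset.subset_union_right
            rw [hint, hun] at hkey
            have hih := ih (I.erase a) herase
            rw [hsum, hxa]
            linarith
        · have : I ⊆ seg k := by
            intro i hi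
            have := hI hi
            rw [h1, Finset.mem_insert] at this
            rcases this with h | h
            · exact absurd (h ▸ hi) haI
            · exact h
          exact ih I this
      · have h1 : seg (k+1) = seg k := by
          rw [segn k (le_of_not_gt hk), segn (k+1) (by omega)]
        exact ih I (h1 ▸ hI)
  have hsegnuniv : seg n = Finset.univ := segn n le_rfl
  have nonneg : ∀ I : Finset α, 0 ≤ c I + ∑ i ∈ I, -(x i) := by
    intro I
    have := main n I (by rw [hsegnuniv]; exact Finset.subset_univ I)
    have h2 : ∑ i ∈ I, -(x i) = -∑ i ∈ I, x i := by
      rw [Finset.sum_neg_distrib]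
    linarith
  have sum0 : ∑ i, -(x i) = 0 := by
    have := tele n
    rw [hsegnuniv, hE] at this
    rw [Finset.sum_neg_distrib, this, neg_zero]
  refine ⟨fun a => -(x a), sum0, nonneg, ?_⟩
  obtain ⟨a, b, hab⟩ := Fintype.exists_pair_of_one_lt_card (by omega : 1 < Fintype.card α)
  have hne1 : ¬ ({a} : Finset α) ⊆ {b} := by simp [Finset.singleton_subset_iff, hab]
  have hne2 : ¬ ({b} : Finset α) ⊆ {a} := by
    simp only [Finset.singleton_subset_iff, Finset.mem_singleton]
    exact fun h => hab h.symm
  have hsa : (∅ : Finset α) ⊂ {a} := Finset.empty_ssubset.mpr ⟨a, Finset.mem_singleton_self a⟩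
  have hsb : (∅ : Finset α) ⊂ {b} := Finset.empty_ssubset.mpr ⟨b, Finset.mem_singleton_self b⟩
  have hua : ({a} : Finset α) ⊂ Finset.univ := by
    rw [Finset.ssubset_univ_iff]
    intro h
    exact hab (Finset.mem_singleton.mp (h ▸ Finset.mem_univ b)).symm
  have hub : ({b} : Finset α) ⊂ Finset.univ := by
    rw [Finset.ssubset_univ_iff]
    intro h
    exact hab (Finset.mem_singleton.mp (h ▸ Finset.mem_univ a))
  have hkey := hsub {a} {b} hne1 hne2 hsa hua hsb hub
  have hint : ({a} : Finset α) ∩ {b} = ∅ := by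
    ext i; simp only [Finset.mem_inter, Finset.mem_singleton, Finset.notMem_empty, iff_false]
    rintro ⟨rfl, h⟩; exact hab h
  have hun : ({a} : Finset α) ∪ {b} = {a, b} := rfl
  rw [hint, hun, h0] at hkey
  have hab2 : c {a, b} + ∑ i ∈ ({a, b} : Finset α), -(x i) ≥ 0 := nonneg {a, b}
  have hsumab : ∑ i ∈ ({a, b} : Finset α), -(x i) = -(x a) + -(x b) :=
    Finset.sum_pair hab
  have hsuma : ∑ i ∈ ({a} : Finset α), -(x i) = -(x a) := Finset.sum_singleton _ _
  have hsumb : ∑ i ∈ ({b} : Finset α), -(x i) = -(x b) := Finset.sum_singleton _ _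
  rcases lt_or_ge 0 (c {a} + -(x a)) with h | h
  · exact ⟨{a}, by rw [hsuma]; exact h⟩
  · refine ⟨{b}, ?_⟩
    rw [hsumb]
    rw [hsumab] at hab2
    linarith
end

section
/- Let A be an n×n real symmetric matrix with all entries nonnegative and all diagonal entries positive. Then the incidence graph of A (the graph on {1, …, n} with an edge between i and j, i ≠ j, whenever A_{ij} ≠ 0) is connected if and only if there exists N such that for all k ≥ N every entry of A^k is positive. Moreover, in this case every entry of A^{n−1} is already positive. -/
/-- Let `A` be an `n×n` real symmetric matrix with nonnegative entries and positive
diagonal entries. Then the incidence graph of `A` is connected if and only if all entries of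
`A^k` are positive for all sufficiently large `k`; moreover, in this case every entry of
`A^(n−1)` is already positive. -/
theorem nonneg_symm_irreducible_iff_power_positive (n : ℕ) (hn : 0 < n)
    (A : Matrix (Fin n) (Fin n) ℝ) (hsymm : A.IsSymm)
    (hnonneg : ∀ i j, 0 ≤ A i j) (hdiag : ∀ i, 0 < A i i) :
    ((SimpleGraph.fromRel fun i j : Fin n => A i j ≠ 0).Connected ↔
      ∃ N : ℕ, ∀ k ≥ N, ∀ i j, 0 < (A ^ k) i j) ∧
    ((SimpleGraph.fromRel fun i j : Fin n => A i j ≠ 0).Connected →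
      ∀ i j, 0 < (A ^ (n - 1)) i j) := by
  set G := SimpleGraph.fromRel fun i j : Fin n => A i j ≠ 0 with hG
  have hApos : ∀ i j, A i j ≠ 0 → 0 < A i j := fun i j h => (hnonneg i j).lt_of_ne (Ne.symm h)
  -- all entries of all powers are nonnegative
  have hpow_nonneg : ∀ k, ∀ i j : Fin n, 0 ≤ (A ^ k) i j := by
    intro k
    induction k with
    | zero =>
      intro i j
      by_cases h : i = j <;> simp [Matrix.one_apply, h]
    | succ k ih =>
      intro i j
      rw [pow_succ', Matrix.mul_apply]
      exact Finset.sum_nonneg fun l _ => mul_nonneg (hnonneg i l) (ih l j)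
  -- diagonal entries of all powers are positive
  have hdiagpow : ∀ k, ∀ i : Fin n, 0 < (A ^ k) i i := by
    intro k
    induction k with
    | zero => intro i; simp [Matrix.one_apply]
    | succ k ih =>
      intro i
      rw [pow_succ', Matrix.mul_apply]
      refine Finset.sum_pos' (fun l _ => mul_nonneg (hnonneg i l) (hpow_nonneg k l i)) ?_
      exact ⟨i, Finset.mem_univ i, mul_pos (hdiag i) (ih i)⟩
  -- adjacency gives a positive entry
  have hadj : ∀ {i j : Fin n}, G.Adj i j → 0 < A i j := by
    intro i j h
    rw [hG, SimpleGraph.fromRel_adj] at h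
    rcases h.2 with h' | h'
    · exact hApos i j h'
    · have : A i j = A j i := (hsymm.apply i j).symm
      rw [this]
      exact hApos j i h'
  -- a walk of length ≤ k gives a positive entry of A^k
  have hwalk : ∀ {i j : Fin n} (p : G.Walk i j) (k : ℕ), p.length ≤ k → 0 < (A ^ k) i j := by
    intro i j p
    induction p with
    | nil => intro k _; exact hdiagpow k _
    | @cons a b c h p ih =>
      intro k hk
      simp only [SimpleGraph.Walk.length_cons] at hk
      obtain ⟨m, rfl⟩ : ∃ m, k = m + 1 := ⟨k - 1, by omega⟩
      rw [pow_succ', Matrix.mul_apply]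
      refine Finset.sum_pos' (fun l _ => mul_nonneg (hnonneg a l) (hpow_nonneg m l c)) ?_
      exact ⟨b, Finset.mem_univ b, mul_pos (hadj h) (ih m (by omega))⟩
  -- positive entry of a power gives reachability
  have hreach : ∀ k, ∀ i j : Fin n, 0 < (A ^ k) i j → G.Reachable i j := by
    intro k
    induction k with
    | zero =>
      intro i j h
      by_cases hij : i = j
      · exact hij ▸ SimpleGraph.Reachable.refl i
      · simp [Matrix.one_apply, hij] at h
    | succ k ih =>
      intro i j h
      rw [pow_succ', Matrix.mul_apply] at h
      obtain ⟨l, -, hl⟩ := Finset.exists_ne_zero_of_sum_ne_zero h.ne'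
      have h1 : A i l ≠ 0 := fun h0 => hl (by simp [h0])
      have h2 : (A ^ k) l j ≠ 0 := fun h0 => hl (by simp [h0])
      have hlj : G.Reachable l j := ih l j ((hpow_nonneg k l j).lt_of_ne (Ne.symm h2))
      by_cases hil : i = l
      · exact hil ▸ hlj
      · exact (SimpleGraph.Adj.reachable (by rw [hG, SimpleGraph.fromRel_adj]; exact ⟨hil, Or.inl h1⟩)).trans hlj
  -- connected gives short walks, hence positivity for k ≥ n - 1
  have hmain : G.Connected → ∀ k ≥ n - 1, ∀ i j : Fin n, 0 < (A ^ k) i j := by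
    intro hc k hk i j
    obtain ⟨p⟩ := hc.preconnected i j
    have hp : p.bypass.length < n := by
      have := SimpleGraph.Walk.IsPath.length_lt p.bypass_isPath
      simpa using this
    exact hwalk p.bypass k (by omega)
  refine ⟨⟨fun hc => ⟨n - 1, hmain hc⟩, ?_⟩, fun hc => hmain hc (n - 1) le_rfl⟩
  rintro ⟨N, hN⟩
  haveI : Nonempty (Fin n) := ⟨⟨0, hn⟩⟩
  exact ⟨fun i j => hreach N i j (hN N le_rfl i j)⟩
end

section
/- (Courant–Fischer min-max, minimum form.) Let A be an n×n real symmetric matrix and let λ₁ ≤ λ₂ ≤ ⋯ ≤ λ_n be its eigenvalues listed with multiplicity. Then for every k with 1 ≤ k ≤ n, λ_k = min over all k-dimensional linear subspaces V ⊆ ℝⁿ of ( max over nonzero x ∈ V of (xᵀ A x)/(xᵀ x) ); i.e. every k-dimensional subspace V satisfies max_{x ∈ V, x ≠ 0} (xᵀAx)/‖x‖² ≥ λ_k, and the subspace spanned by orthonormal eigenvectors for λ₁, …, λ_k achieves equality. -/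
open Matrix

lemma dotProduct_sum' {n : ℕ} {ι : Type*} (s : Finset ι) (u : Fin n → ℝ) (f : ι → Fin n → ℝ) :
    u ⬝ᵥ (∑ i ∈ s, f i) = ∑ i ∈ s, u ⬝ᵥ f i := by
  simp [dotProduct, Finset.sum_apply, Finset.mul_sum]
  exact Finset.sum_comm

lemma sum_dotProduct' {n : ℕ} {ι : Type*} (s : Finset ι) (u : Fin n → ℝ) (f : ι → Fin n → ℝ) :
    (∑ i ∈ s, f i) ⬝ᵥ u = ∑ i ∈ s, f i ⬝ᵥ u := by
  simp [dotProduct, Finset.sum_apply, Finset.sum_mul]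
  exact Finset.sum_comm

lemma helper_dots {n : ℕ} {ι : Type*} [Fintype ι] [DecidableEq ι]
    (A : Matrix (Fin n) (Fin n) ℝ) (w : ι → Fin n → ℝ) (ν : ι → ℝ)
    (hortho : ∀ i j, w i ⬝ᵥ w j = if i = j then (1 : ℝ) else 0)
    (heig : ∀ i, A *ᵥ w i = ν i • w i) (c : ι → ℝ) :
    (∑ i, c i • w i) ⬝ᵥ (∑ i, c i • w i) = ∑ i, (c i)^2 ∧
    (∑ i, c i • w i) ⬝ᵥ (A *ᵥ (∑ i, c i • w i)) = ∑ i, ν i * (c i)^2 := by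
  have hAx : A *ᵥ (∑ i, c i • w i) = ∑ i, c i • (ν i • w i) := by
    rw [← A.mulVecLin_apply, map_sum]
    simp [heig]
  constructor
  · simp [sum_dotProduct', dotProduct_sum', smul_dotProduct, dotProduct_smul,
      hortho, mul_ite, Finset.sum_ite_eq', sq]
  · rw [hAx]
    simp [sum_dotProduct', dotProduct_sum', smul_dotProduct, dotProduct_smul,
      hortho, mul_ite, Finset.sum_ite_eq', sq]
    exact Finset.sum_congr rfl fun i _ => by ring

lemma helper_li {n : ℕ} (v : Fin n → (Fin n → ℝ))
    (hortho : ∀ i j, v i ⬝ᵥ v j = if i = j then (1 : ℝ) else 0) :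
    LinearIndependent ℝ v := by
  rw [Fintype.linearIndependent_iff]
  intro c hc i
  have h := congrArg (fun y => v i ⬝ᵥ y) hc
  simpa [dotProduct_sum', dotProduct_smul, hortho, mul_ite, Finset.sum_ite_eq'] using h

/-- Courant–Fischer min-max, minimum form: if `A` is a real symmetric `n×n` matrix
with eigenvalues `μ 0 ≤ μ 1 ≤ ⋯ ≤ μ (n-1)` (listed with multiplicity, with an orthonormal family
of eigenvectors `v`), then for every `k`, every `(k+1)`-dimensional subspace `V ⊆ ℝⁿ` contains a
nonzero `x` with Rayleigh quotient at least `μ k`, and the span of the first `k+1` eigenvectors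
is a `(k+1)`-dimensional subspace on which the Rayleigh quotient is at most `μ k`; i.e.
`μ k = min_{dim V = k+1} max_{0 ≠ x ∈ V} (xᵀAx)/(xᵀx)`. -/
theorem courant_fischer_min_form (n : ℕ) (A : Matrix (Fin n) (Fin n) ℝ) (hA : A.IsSymm)
    (μ : Fin n → ℝ) (hmono : Monotone μ)
    (v : Fin n → (Fin n → ℝ))
    (hortho : ∀ i j, v i ⬝ᵥ v j = if i = j then (1 : ℝ) else 0)
    (heig : ∀ i, A *ᵥ v i = μ i • v i) :
    ∀ k : Fin n,
      (∀ V : Submodule ℝ (Fin n → ℝ), Module.finrank ℝ V = (k : ℕ) + 1 →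
        ∃ x ∈ V, x ≠ 0 ∧ μ k * (x ⬝ᵥ x) ≤ x ⬝ᵥ (A *ᵥ x)) ∧
      Module.finrank ℝ (Submodule.span ℝ (v '' {j : Fin n | j ≤ k})) = (k : ℕ) + 1 ∧
      (∀ x ∈ Submodule.span ℝ (v '' {j : Fin n | j ≤ k}),
        x ⬝ᵥ (A *ᵥ x) ≤ μ k * (x ⬝ᵥ x)) := by
  have hli := helper_li v hortho
  intro k
  -- restricted families
  have hsub_ortho : ∀ (S : Set (Fin n)) (i j : S), v i ⬝ᵥ v j = if i = j then (1:ℝ) else 0 := by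
    intro S i j
    rw [hortho]
    simp [Subtype.ext_iff]
  have hrange : ∀ (S : Set (Fin n)), v '' S = Set.range (fun i : S => v i) := by
    intro S; ext y; simp
  have hIic : {j : Fin n | j ≤ k} = Set.Iic k := rfl
  -- finrank of spans of restricted families
  have hfr : ∀ (S : Set (Fin n)) [Fintype S],
      Module.finrank ℝ (Submodule.span ℝ (v '' S)) = Fintype.card S := by
    intro S _
    rw [hrange S]
    exact finrank_span_eq_card (hli.comp Subtype.val Subtype.val_injective)
  refine ⟨?_, ?_, ?_⟩
  · -- min part: every (k+1)-dimensional subspace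
    intro V hV
    set W := Submodule.span ℝ (v '' Set.Ici k) with hW
    have hWr : Module.finrank ℝ W = n - (k:ℕ) := by
      rw [hW, hfr (Set.Ici k), ← Set.toFinset_card, Set.toFinset_Ici, Fin.card_Ici]
    have hsum := Submodule.finrank_sup_add_finrank_inf_eq V W
    have hle : Module.finrank ℝ ↥(V ⊔ W) ≤ n := by
      have := Submodule.finrank_le (V ⊔ W)
      simpa using this
    have hpos : 0 < Module.finrank ℝ ↥(V ⊓ W) := by
      have hk : (k:ℕ) < n := k.2
      omega
    obtain ⟨x, hxVW, hx0⟩ := Submodule.exists_mem_ne_zero_of_ne_bot (p := V ⊓ W) (by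
      intro hbot
      rw [hbot] at hpos
      simp at hpos)
    refine ⟨x, hxVW.1, hx0, ?_⟩
    have hxW : x ∈ W := hxVW.2
    rw [hW, hrange (Set.Ici k)] at hxW
    obtain ⟨c, hc⟩ := (Submodule.mem_span_range_iff_exists_fun ℝ).mp hxW
    have hd := helper_dots A (fun i : Set.Ici k => v i) (fun i : Set.Ici k => μ i)
      (hsub_ortho _) (fun i => heig i) c
    rw [← hc]
    rw [hd.1, hd.2, Finset.mul_sum]
    apply Finset.sum_le_sum
    intro i _
    exact mul_le_mul_of_nonneg_right (hmono i.2) (sq_nonneg _)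
  · rw [hIic, hfr (Set.Iic k), ← Set.toFinset_card, Set.toFinset_Iic, Fin.card_Iic]
  · intro x hx
    rw [hIic, hrange (Set.Iic k)] at hx
    obtain ⟨c, hc⟩ := (Submodule.mem_span_range_iff_exists_fun ℝ).mp hx
    have hd := helper_dots A (fun i : Set.Iic k => v i) (fun i : Set.Iic k => μ i)
      (hsub_ortho _) (fun i => heig i) c
    rw [← hc, hd.1, hd.2, Finset.mul_sum]
    apply Finset.sum_le_sum
    intro i _
    exact mul_le_mul_of_nonneg_right (hmono i.2) (sq_nonneg _)
end

section
/- Let A be an n×n real symmetric matrix with exactly one positive eigenvalue (counted with multiplicity) and let x, y ∈ ℝⁿ with xᵀ A x > 0. Then (xᵀ A x)(yᵀ A y) ≤ (xᵀ A y)². -/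
open Matrix Finset

/-- Weighted Cauchy–Schwarz over a finset with nonnegative weights. -/
lemma weighted_cs {ι : Type*} (s : Finset ι) (w a b : ι → ℝ) (hw : ∀ i ∈ s, 0 ≤ w i) :
    (∑ i ∈ s, w i * a i * b i) ^ 2 ≤
      (∑ i ∈ s, w i * a i * a i) * ∑ i ∈ s, w i * b i * b i := by
  refine Finset.sum_sq_le_sum_mul_sum_of_sq_eq_mul s (fun i hi => ?_) (fun i hi => ?_)
    (fun i hi => by ring)
  · rw [mul_assoc]; exact mul_nonneg (hw i hi) (mul_self_nonneg _)
  · rw [mul_assoc]; exact mul_nonneg (hw i hi) (mul_self_nonneg _)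

/-- Reverse Cauchy–Schwarz for a diagonal form whose weights are nonpositive away from one
index. -/
lemma key_diag {ι : Type*} [Fintype ι] [DecidableEq ι] (e : ι) (w u v : ι → ℝ)
    (hw : ∀ i, i ≠ e → w i ≤ 0)
    (hu : 0 < ∑ i, w i * u i * u i) :
    (∑ i, w i * u i * u i) * (∑ i, w i * v i * v i) ≤ (∑ i, w i * u i * v i) ^ 2 := by
  by_contra hcon
  push_neg at hcon
  set Buu := ∑ i, w i * u i * u i with hBuu
  set Bvv := ∑ i, w i * v i * v i with hBvv
  set Buv := ∑ i, w i * u i * v i with hBuv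
  have hvv : 0 < Bvv := by
    have hp : 0 < Buu * Bvv := lt_of_le_of_lt (sq_nonneg Buv) hcon
    rcases mul_pos_iff.mp hp with ⟨_, h⟩ | ⟨h, _⟩
    · exact h
    · linarith
  -- z = Bvv • u - Buv • v is B-orthogonal to v and has positive B-norm
  set z : ι → ℝ := fun i => Bvv * u i - Buv * v i with hz
  have hsum : ∀ a b : ι → ℝ, ∀ c d : ℝ,
      ∑ i, w i * (c * a i - d * b i) * (c * a i - d * b i) =
        c * c * (∑ i, w i * a i * a i) - 2 * (c * d) * (∑ i, w i * a i * b i)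
          + d * d * (∑ i, w i * b i * b i) := by
    intro a b c d
    rw [show (∑ i, w i * (c * a i - d * b i) * (c * a i - d * b i)) =
        ∑ i, (c * c * (w i * a i * a i) - 2 * (c * d) * (w i * a i * b i)
          + d * d * (w i * b i * b i)) from Finset.sum_congr rfl fun i _ => by ring,
      Finset.sum_add_distrib, Finset.sum_sub_distrib, ← Finset.mul_sum, ← Finset.mul_sum,
      ← Finset.mul_sum]
  have hsum2 : ∀ a b : ι → ℝ, ∀ c d : ℝ,
      ∑ i, w i * (c * a i - d * b i) * v i =
        c * (∑ i, w i * a i * v i) - d * (∑ i, w i * b i * v i) := by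
    intro a b c d
    rw [show (∑ i, w i * (c * a i - d * b i) * v i) =
        ∑ i, (c * (w i * a i * v i) - d * (w i * b i * v i)) from
        Finset.sum_congr rfl fun i _ => by ring,
      Finset.sum_sub_distrib, ← Finset.mul_sum, ← Finset.mul_sum]
  have hBzz : ∑ i, w i * z i * z i = Bvv * (Buu * Bvv - Buv ^ 2) := by
    have h2 : ∑ i, w i * v i * u i = Buv := Finset.sum_congr rfl fun i _ => by ring
    rw [hz]
    rw [hsum u v Bvv Buv]
    ring
  have hBzv : ∑ i, w i * z i * v i = 0 := by
    rw [hz, hsum2 u v Bvv Buv]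
    ring
  have hzz : 0 < ∑ i, w i * z i * z i := by
    rw [hBzz]
    exact mul_pos hvv (by linarith [hcon])
  -- split off the index e
  have split : ∀ a b : ι → ℝ,
      ∑ i, w i * a i * b i = w e * a e * b e - ∑ i ∈ univ.erase e, (-w i) * a i * b i := by
    intro a b
    rw [← Finset.add_sum_erase _ _ (Finset.mem_univ e)]
    have h4 : ∑ i ∈ univ.erase e, w i * a i * b i =
        -∑ i ∈ univ.erase e, (-w i) * a i * b i := by
      rw [← Finset.sum_neg_distrib]
      exact Finset.sum_congr rfl fun i _ => by ring
    rw [h4]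
    ring
  have hP : ∀ a : ι → ℝ, 0 ≤ ∑ i ∈ univ.erase e, (-w i) * a i * a i := by
    intro a
    refine Finset.sum_nonneg fun i hi => ?_
    rw [mul_assoc]
    exact mul_nonneg (neg_nonneg.2 (hw i (Finset.ne_of_mem_erase hi))) (mul_self_nonneg _)
  set Pzz := ∑ i ∈ univ.erase e, (-w i) * z i * z i
  set Pvv := ∑ i ∈ univ.erase e, (-w i) * v i * v i
  set Pzv := ∑ i ∈ univ.erase e, (-w i) * z i * v i
  have h1 : w e * z e * z e - Pzz > 0 := by rw [← split]; exact hzz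
  have h2 : w e * v e * v e - Pvv > 0 := by rw [← split]; exact hvv
  have h3 : w e * z e * v e = Pzv := by
    have := hBzv
    rw [split z v] at this
    linarith
  have hcs : Pzv ^ 2 ≤ Pzz * Pvv := by
    refine weighted_cs _ _ _ _ fun i hi => ?_
    exact neg_nonneg.2 (hw i (Finset.ne_of_mem_erase hi))
  have hPzz := hP z
  have hPvv := hP v
  have hlt : Pzz * Pvv < (w e * z e * z e) * (w e * v e * v e) :=
    calc Pzz * Pvv ≤ Pzz * (w e * v e * v e) :=
          mul_le_mul_of_nonneg_left (by linarith) hPzz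
      _ < (w e * z e * z e) * (w e * v e * v e) :=
          mul_lt_mul_of_pos_right (by linarith) (by linarith)
  have : (w e * z e * v e) ^ 2 < (w e * z e * v e) ^ 2 := by
    calc (w e * z e * v e) ^ 2 = Pzv ^ 2 := by rw [h3]
      _ ≤ Pzz * Pvv := hcs
      _ < (w e * z e * z e) * (w e * v e * v e) := hlt
      _ = (w e * z e * v e) ^ 2 := by ring
  exact absurd this (lt_irrefl _)

/-- reverse Cauchy–Schwarz for Lorentzian-signature forms: let `A` be an `n×n`
real symmetric matrix with exactly one positive eigenvalue (counted with multiplicity) and let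
`x, y ∈ ℝⁿ` with `xᵀ A x > 0`. Then `(xᵀ A x)(yᵀ A y) ≤ (xᵀ A y)²`. -/
theorem lorentzian_reverse_cauchy_schwarz {n : ℕ} (A : Matrix (Fin n) (Fin n) ℝ)
    (hA : A.IsHermitian)
    (h1 : (Finset.univ.filter fun i => 0 < hA.eigenvalues i).card = 1)
    (x y : Fin n → ℝ) (hx : 0 < x ⬝ᵥ (A *ᵥ x)) :
    (x ⬝ᵥ (A *ᵥ x)) * (y ⬝ᵥ (A *ᵥ y)) ≤ (x ⬝ᵥ (A *ᵥ y)) ^ 2 := by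
  obtain ⟨e, he⟩ := Finset.card_eq_one.mp h1
  have hpos : 0 < hA.eigenvalues e := by
    have : e ∈ Finset.univ.filter fun i => 0 < hA.eigenvalues i := by
      rw [he]; exact Finset.mem_singleton_self e
    exact (Finset.mem_filter.mp this).2
  have hneg : ∀ i, i ≠ e → hA.eigenvalues i ≤ 0 := by
    intro i hi
    by_contra h
    push_neg at h
    have : i ∈ Finset.univ.filter fun j => 0 < hA.eigenvalues j :=
      Finset.mem_filter.mpr ⟨Finset.mem_univ i, h⟩
    rw [he, Finset.mem_singleton] at this
    exact hi this
  set U : Matrix (Fin n) (Fin n) ℝ := (hA.eigenvectorUnitary : Matrix (Fin n) (Fin n) ℝ) with hU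
  have hsU : star U = Uᵀ := by
    rw [Matrix.star_eq_conjTranspose]
    ext i j
    simp [Matrix.conjTranspose_apply]
  have hform : ∀ a b : Fin n → ℝ,
      a ⬝ᵥ (A *ᵥ b) = ∑ i, hA.eigenvalues i * (star U *ᵥ a) i * (star U *ᵥ b) i := by
    intro a b
    conv_lhs => rw [hA.spectral_theorem, Unitary.conjStarAlgAut_apply]
    rw [← Matrix.mulVec_mulVec, ← Matrix.mulVec_mulVec, Matrix.dotProduct_mulVec,
      ← Matrix.mulVec_transpose, ← hsU]
    simp only [dotProduct, Matrix.mulVec_diagonal, Function.comp_apply]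
    exact Finset.sum_congr rfl fun i _ => by simp; ring
  rw [hform x x, hform x y, hform y y] at *
  exact key_diag e hA.eigenvalues (star U *ᵥ x) (star U *ᵥ y) hneg hx
end

section
/- (Perron–Frobenius, symmetric version.) Let A be an n×n real symmetric matrix whose off-diagonal entries are all nonnegative and which is irreducible, i.e. the graph on {1, …, n} with an edge between distinct i and j whenever A_{ij} ≠ 0 is connected. Then the largest eigenvalue λ_max of A is simple (has multiplicity one), there exists an eigenvector v of A for λ_max with all entries strictly positive, and every eigenvector of A all of whose entries are strictly positive is a scalar multiple of v. -/
open Matrix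

section PFaux

variable {n : ℕ}

private lemma pf_dot_symm (A : Matrix (Fin n) (Fin n) ℝ) (hA : A.IsHermitian)
    (v w : Fin n → ℝ) : v ⬝ᵥ (A *ᵥ w) = (A *ᵥ v) ⬝ᵥ w := by
  have hs : ∀ i j, A j i = A i j := fun i j => by simpa using hA.apply i j
  simp only [dotProduct, mulVec, Finset.mul_sum, Finset.sum_mul]
  rw [Finset.sum_comm]
  refine Finset.sum_congr rfl fun i _ => Finset.sum_congr rfl fun j _ => ?_
  rw [hs i j]; ring

/-- `l • 1 - A` is positive semidefinite when `l` dominates all eigenvalues. -/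
private lemma pf_psd (A : Matrix (Fin n) (Fin n) ℝ) (hA : A.IsHermitian) (l : ℝ)
    (hl : ∀ i, hA.eigenvalues i ≤ l) :
    (l • (1 : Matrix (Fin n) (Fin n) ℝ) - A).PosSemidef := by
  have hU : (hA.eigenvectorUnitary : Matrix (Fin n) (Fin n) ℝ) *
      (hA.eigenvectorUnitary : Matrix (Fin n) (Fin n) ℝ)ᴴ = 1 := by
    rw [← Matrix.star_eq_conjTranspose]
    exact (Matrix.mem_unitaryGroup_iff).mp (hA.eigenvectorUnitary).2
  have key : l • (1 : Matrix (Fin n) (Fin n) ℝ) - A =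
      (hA.eigenvectorUnitary : Matrix (Fin n) (Fin n) ℝ) *
        Matrix.diagonal (fun i => l - hA.eigenvalues i) *
        (hA.eigenvectorUnitary : Matrix (Fin n) (Fin n) ℝ)ᴴ := by
    have hD : Matrix.diagonal (fun i : Fin n => l - hA.eigenvalues i)
        = l • (1 : Matrix (Fin n) (Fin n) ℝ)
          - Matrix.diagonal (RCLike.ofReal ∘ hA.eigenvalues) := by
      rw [Matrix.smul_one_eq_diagonal, ← Matrix.diagonal_sub]
      congr 1
    rw [hD, Matrix.mul_sub, Matrix.sub_mul]
    rw [Matrix.mul_smul, Matrix.mul_one, Matrix.smul_mul, hU]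
    congr 1
    rw [← Matrix.star_eq_conjTranspose]
    exact hA.spectral_theorem
  rw [key]
  exact (Matrix.posSemidef_diagonal_iff.mpr fun i => by
    simpa using hl i).mul_mul_conjTranspose_same _

/-- The componentwise absolute value of an eigenvector for the top eigenvalue is again
an eigenvector. -/
private lemma pf_abs_eig (A : Matrix (Fin n) (Fin n) ℝ) (hA : A.IsHermitian)
    (hoff : ∀ i j, i ≠ j → 0 ≤ A i j) (l : ℝ) (hl : ∀ i, hA.eigenvalues i ≤ l)
    (x : Fin n → ℝ) (hx : A *ᵥ x = l • x) :
    A *ᵥ (fun i => |x i|) = l • (fun i => |x i|) := by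
  set B : Matrix (Fin n) (Fin n) ℝ := l • 1 - A with hBdef
  have hB : B.PosSemidef := pf_psd A hA l hl
  have hBmul : ∀ y : Fin n → ℝ, B *ᵥ y = l • y - A *ᵥ y := by
    intro y
    rw [hBdef, Matrix.sub_mulVec, Matrix.smul_mulVec, Matrix.one_mulVec]
  set y : Fin n → ℝ := fun i => |x i| with hy
  have hcomp : x ⬝ᵥ (A *ᵥ x) ≤ y ⬝ᵥ (A *ᵥ y) := by
    simp only [dotProduct, mulVec, Finset.mul_sum]
    refine Finset.sum_le_sum fun i _ => Finset.sum_le_sum fun j _ => ?_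
    rcases eq_or_ne i j with rfl | hij
    · have h1 : |x i| * |x i| = x i * x i := abs_mul_abs_self (x i)
      simp only [hy]
      refine le_of_eq ?_
      calc x i * (A i i * x i) = A i i * (x i * x i) := by ring
        _ = A i i * (|x i| * |x i|) := by rw [h1]
        _ = |x i| * (A i i * |x i|) := by ring
    · have h1 : A i j * (x i * x j) ≤ A i j * |x i * x j| :=
        mul_le_mul_of_nonneg_left (le_abs_self _) (hoff i j hij)
      have h2 : |x i * x j| = |x i| * |x j| := abs_mul _ _
      simp only [hy]
      calc x i * (A i j * x j) = A i j * (x i * x j) := by ring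
        _ ≤ A i j * |x i * x j| := h1
        _ = |x i| * (A i j * |x j|) := by rw [h2]; ring

  have hyy : y ⬝ᵥ y = x ⬝ᵥ x := by
    simp only [dotProduct, hy]
    exact Finset.sum_congr rfl fun i _ => abs_mul_abs_self (x i)
  have hxB : x ⬝ᵥ (B *ᵥ x) = 0 := by
    rw [hBmul, hx, sub_self, dotProduct_zero]
  have hyB0 : y ⬝ᵥ (B *ᵥ y) ≤ 0 := by
    rw [hBmul]
    calc y ⬝ᵥ (l • y - A *ᵥ y) = l * (y ⬝ᵥ y) - y ⬝ᵥ (A *ᵥ y) := by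
          rw [dotProduct_sub, dotProduct_smul]; simp [smul_eq_mul]
      _ ≤ l * (x ⬝ᵥ x) - x ⬝ᵥ (A *ᵥ x) := by rw [hyy]; linarith [hcomp]
      _ = x ⬝ᵥ (B *ᵥ x) := by
          rw [hBmul, dotProduct_sub, dotProduct_smul]; simp [smul_eq_mul]
      _ = 0 := hxB
  have hyBge : 0 ≤ y ⬝ᵥ (B *ᵥ y) := by
    have := hB.dotProduct_mulVec_nonneg y
    simpa using this
  have hyB : star y ⬝ᵥ (B *ᵥ y) = 0 := by
    simpa using le_antisymm hyB0 hyBge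
  have hBy : B *ᵥ y = 0 := (hB.dotProduct_mulVec_zero_iff y).mp hyB
  rw [hBmul] at hBy
  exact (sub_eq_zero.mp hBy).symm

/-- A nonzero nonnegative eigenvector of an irreducible weakly nonnegative matrix is
entrywise positive. -/
private lemma pf_pos (A : Matrix (Fin n) (Fin n) ℝ) (hA : A.IsHermitian)
    (hoff : ∀ i j, i ≠ j → 0 ≤ A i j)
    (hconn : (SimpleGraph.fromRel fun i j : Fin n => A i j ≠ 0).Connected)
    (c : ℝ) (w : Fin n → ℝ) (hw : A *ᵥ w = c • w)
    (h0 : ∀ i, 0 ≤ w i) (hne : w ≠ 0) : ∀ i, 0 < w i := by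
  by_contra hcon
  push_neg at hcon
  obtain ⟨k, hk⟩ := hcon
  have hk0 : w k = 0 := le_antisymm hk (h0 k)
  have step : ∀ a b : Fin n,
      (SimpleGraph.fromRel fun i j : Fin n => A i j ≠ 0).Adj a b → w a = 0 → w b = 0 := by
    intro a b hab ha0
    rw [SimpleGraph.fromRel_adj] at hab
    obtain ⟨hne', hor⟩ := hab
    have h1 : ∑ j, A a j * w j = 0 := by
      have := congrFun hw a
      simp only [mulVec, dotProduct, Pi.smul_apply, smul_eq_mul, ha0, mul_zero] at this
      exact this
    have hterm : ∀ j ∈ Finset.univ, 0 ≤ A a j * w j := by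
      intro j _
      rcases eq_or_ne a j with rfl | haj
      · rw [ha0, mul_zero]
      · exact mul_nonneg (hoff a j haj) (h0 j)
    have hall := (Finset.sum_eq_zero_iff_of_nonneg hterm).mp h1 b (Finset.mem_univ b)
    have hAab : A a b ≠ 0 := by
      rcases hor with hAab | hAba
      · exact hAab
      · have hs : A a b = A b a := by simpa using hA.apply b a
        rw [hs]; exact hAba
    exact (mul_eq_zero.mp hall).resolve_left hAab
  have key0 : ∀ (a b : Fin n)
      (p : (SimpleGraph.fromRel fun i j : Fin n => A i j ≠ 0).Walk a b),
      w a = 0 → w b = 0 := by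
    intro a b p
    induction p with
    | nil => exact id
    | cons h q ih => exact fun ha => ih (step _ _ h ha)
  have key : ∀ i, w i = 0 := by
    intro i
    obtain ⟨p⟩ := hconn k i
    exact key0 k i p hk0
  exact hne (funext key)

end PFaux

/-- Perron–Frobenius, symmetric version: let `A` be an `n×n` real symmetric matrix
with nonnegative off-diagonal entries which is irreducible (its incidence graph is connected).
Then the largest eigenvalue `lmax` of `A` is simple, it has an eigenvector with all entries
strictly positive, and every eigenvector of `A` with all entries strictly positive is a scalar
multiple of that one. -/
theorem perron_frobenius_symmetric {n : ℕ} (A : Matrix (Fin n) (Fin n) ℝ)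
    (hA : A.IsHermitian) (hoff : ∀ i j, i ≠ j → 0 ≤ A i j)
    (hconn : (SimpleGraph.fromRel fun i j : Fin n => A i j ≠ 0).Connected) :
    ∃ lmax : ℝ,
      (∀ i, hA.eigenvalues i ≤ lmax) ∧ (∃ i, hA.eigenvalues i = lmax) ∧
      (Finset.univ.filter fun i => hA.eigenvalues i = lmax).card = 1 ∧
      ∃ v : Fin n → ℝ, (∀ i, 0 < v i) ∧ A *ᵥ v = lmax • v ∧
        ∀ (w : Fin n → ℝ) (c : ℝ), A *ᵥ w = c • w → (∀ i, 0 < w i) →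
          ∃ t : ℝ, w = t • v := by
  have hnon : Nonempty (Fin n) := hconn.nonempty
  obtain ⟨i₀, -, hmax⟩ := Finset.exists_max_image Finset.univ hA.eigenvalues
    ⟨Classical.arbitrary _, Finset.mem_univ _⟩
  set lmax := hA.eigenvalues i₀ with hlm
  have hl : ∀ i, hA.eigenvalues i ≤ lmax := fun i => hmax i (Finset.mem_univ i)
  have habs : ∀ (x : Fin n → ℝ), A *ᵥ x = lmax • x → x ≠ 0 → ∀ i, 0 < |x i| := by
    intro x hx hx0
    have h1 := pf_abs_eig A hA hoff lmax hl x hx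
    have h2 : (fun i => |x i|) ≠ 0 := by
      intro h
      apply hx0
      funext i
      have := congrFun h i
      simpa [abs_eq_zero] using this
    exact pf_pos A hA hoff hconn lmax (fun i => |x i|) h1 (fun i => abs_nonneg _) h2
  have hzero : ∀ (x : Fin n → ℝ) (k : Fin n), A *ᵥ x = lmax • x → x k = 0 → x = 0 := by
    intro x k hx hxk
    by_contra h
    have h2 := habs x hx h k
    rw [hxk] at h2
    simp at h2
  set u : Fin n → ℝ := ⇑(hA.eigenvectorBasis i₀) with hu
  have huev : A *ᵥ u = lmax • u := hA.mulVec_eigenvectorBasis i₀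
  have hu0 : u ≠ 0 := by
    intro h
    have hb : hA.eigenvectorBasis i₀ = 0 := by
      apply PiLp.ext
      intro i
      exact congrFun h i
    have hn := hA.eigenvectorBasis.orthonormal.1 i₀
    rw [hb] at hn
    simp at hn
  set v : Fin n → ℝ := fun i => |u i| with hv
  have hvpos : ∀ i, 0 < v i := habs u huev hu0
  have hvev : A *ᵥ v = lmax • v := pf_abs_eig A hA hoff lmax hl u huev
  have k0 : Fin n := Classical.arbitrary (Fin n)
  refine ⟨lmax, hl, ⟨i₀, rfl⟩, ?_, v, hvpos, hvev, ?_⟩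
  · rw [Finset.card_eq_one]
    refine ⟨i₀, Finset.eq_singleton_iff_unique_mem.mpr ⟨by simp [hlm], ?_⟩⟩
    intro j hj
    rw [Finset.mem_filter] at hj
    by_contra hji
    set u' : Fin n → ℝ := ⇑(hA.eigenvectorBasis j) with hu'
    have hu'ev : A *ᵥ u' = lmax • u' := by
      have h3 := hA.mulVec_eigenvectorBasis j
      rw [hj.2] at h3
      exact h3
    have hu'0 : u' ≠ 0 := by
      intro h
      have hb : hA.eigenvectorBasis j = 0 := by
        apply PiLp.ext
        intro i
        exact congrFun h i
      have hn := hA.eigenvectorBasis.orthonormal.1 j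
      rw [hb] at hn
      simp at hn
    have hukne : u k0 ≠ 0 := abs_pos.mp (habs u huev hu0 k0)
    have hu'kne : u' k0 ≠ 0 := abs_pos.mp (habs u' hu'ev hu'0 k0)
    set t : ℝ := u' k0 / u k0 with ht
    have htne : t ≠ 0 := div_ne_zero hu'kne hukne
    set x : Fin n → ℝ := u' - t • u with hx
    have hxev : A *ᵥ x = lmax • x := by
      rw [hx, Matrix.mulVec_sub, Matrix.mulVec_smul, huev, hu'ev, smul_sub, smul_comm]
    have hxk : x k0 = 0 := by
      simp only [hx, Pi.sub_apply, Pi.smul_apply, smul_eq_mul, ht]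
      field_simp
      ring
    have hx0 : x = 0 := hzero x k0 hxev hxk
    have hut : ∀ i, u' i = t * u i := by
      intro i
      have h4 := congrFun hx0 i
      simp only [hx, Pi.sub_apply, Pi.smul_apply, smul_eq_mul, Pi.zero_apply] at h4
      linarith
    have horth : (inner ℝ (hA.eigenvectorBasis i₀) (hA.eigenvectorBasis j) : ℝ) = 0 :=
      hA.eigenvectorBasis.orthonormal.2 (fun h => hji h.symm)
    have hinner1 : (inner ℝ (hA.eigenvectorBasis i₀) (hA.eigenvectorBasis i₀) : ℝ) = 1 := by
      rw [real_inner_self_eq_norm_sq, hA.eigenvectorBasis.orthonormal.1 i₀]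
      norm_num
    rw [PiLp.inner_apply] at horth hinner1
    simp only [RCLike.inner_apply', conj_trivial] at horth hinner1
    have hsum : ∑ i, u i * u' i = t * ∑ i, u i * u i := by
      rw [Finset.mul_sum]
      exact Finset.sum_congr rfl fun i _ => by rw [hut i]; ring
    have horth2 : ∑ i, u i * u' i = 0 := horth
    have hinner2 : ∑ i, u i * u i = 1 := hinner1
    rw [horth2, hinner2, mul_one] at hsum
    exact htne hsum.symm
  · intro w c hw hwpos
    have hvw : 0 < v ⬝ᵥ w :=
      Finset.sum_pos (fun i _ => mul_pos (hvpos i) (hwpos i)) Finset.univ_nonempty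
    have hcl : c = lmax := by
      have h1 : v ⬝ᵥ (A *ᵥ w) = (A *ᵥ v) ⬝ᵥ w := pf_dot_symm A hA v w
      rw [hw, hvev, dotProduct_smul, smul_dotProduct] at h1
      simp only [smul_eq_mul] at h1
      exact mul_right_cancel₀ (ne_of_gt hvw) h1
    rw [hcl] at hw
    have hvkne : v k0 ≠ 0 := ne_of_gt (hvpos k0)
    set t : ℝ := w k0 / v k0 with ht
    set x : Fin n → ℝ := w - t • v with hx
    have hxev : A *ᵥ x = lmax • x := by
      rw [hx, Matrix.mulVec_sub, Matrix.mulVec_smul, hvev, hw, smul_sub, smul_comm]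
    have hxk : x k0 = 0 := by
      simp only [hx, Pi.sub_apply, Pi.smul_apply, smul_eq_mul, ht]
      field_simp
      ring
    have hx0 : x = 0 := hzero x k0 hxev hxk
    exact ⟨t, sub_eq_zero.mp hx0⟩
end

section
/- Let f ∈ ℝ[x₁, …, x_n] be homogeneous of degree d ≥ 2 and let x ∈ ℝⁿ have all coordinates positive. Suppose that for every i, ∂_i f(x) > 0 and the Hessian matrix H_x(∂_i f) of the partial derivative ∂_i f at x has exactly one positive eigenvalue counted with multiplicity. Let Λ be the diagonal matrix with diagonal entries x_i / ∂_i f(x) and set B := Λ^{1/2} (H_x f) Λ^{1/2}. Then B has no eigenvalue in the open interval (0, d−1); equivalently, every eigenvalue λ of B satisfies λ(λ − (d−1)) ≥ 0. -/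
open Matrix MvPolynomial

/-- The gradient of a polynomial `f ∈ ℝ[x₁,…,xₙ]` evaluated at `x ∈ ℝⁿ`. -/
noncomputable def gradAt {n : ℕ} (f : MvPolynomial (Fin n) ℝ) (x : Fin n → ℝ) : Fin n → ℝ :=
  fun i => MvPolynomial.eval x (MvPolynomial.pderiv i f)

/-- The Hessian matrix of a polynomial `f ∈ ℝ[x₁,…,xₙ]` evaluated at `x ∈ ℝⁿ`. -/
noncomputable def hessAt {n : ℕ} (f : MvPolynomial (Fin n) ℝ) (x : Fin n → ℝ) :
    Matrix (Fin n) (Fin n) ℝ :=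
  Matrix.of fun i j => MvPolynomial.eval x (MvPolynomial.pderiv i (MvPolynomial.pderiv j f))

section PolyLemmas

variable {σ : Type*} [DecidableEq σ]

lemma pderiv_pderiv_comm (i j : σ) (f : MvPolynomial σ ℝ) :
    pderiv i (pderiv j f) = pderiv j (pderiv i f) := by
  induction f using MvPolynomial.induction_on' with
  | add p q hp hq => simp [map_add, hp, hq]
  | monomial u r =>
    rcases eq_or_ne i j with rfl | hij
    · rfl
    · have hu : (u - Finsupp.single j 1) - Finsupp.single i 1
          = (u - Finsupp.single i 1) - Finsupp.single j 1 := by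
        ext a
        simp only [Finsupp.tsub_apply]
        omega
      have h2 : (u - Finsupp.single j 1 : σ →₀ ℕ) i = u i := by
        rw [Finsupp.tsub_apply, Finsupp.single_eq_of_ne' (Ne.symm hij), Nat.sub_zero]
      have h3 : (u - Finsupp.single i 1 : σ →₀ ℕ) j = u j := by
        rw [Finsupp.tsub_apply, Finsupp.single_eq_of_ne' hij, Nat.sub_zero]
      simp only [pderiv_monomial, hu, h2, h3]
      ring_nf

variable [Fintype σ]

lemma degree_eq_sum (u : σ →₀ ℕ) : u.degree = ∑ i, u i := by
  rw [Finsupp.degree]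
  exact Finset.sum_subset (Finset.subset_univ _) (by
    intro a _ ha
    exact Finsupp.notMem_support_iff.mp ha)

lemma euler_monomial (u : σ →₀ ℕ) (r : ℝ) (x : σ → ℝ) (i : σ) :
    x i * eval x (pderiv i (monomial u r)) = (u i : ℝ) * eval x (monomial u r) := by
  rw [pderiv_monomial, eval_monomial, eval_monomial]
  rcases Nat.eq_zero_or_pos (u i) with h0 | hpos
  · simp [h0]
  · have hprod : ∀ (v : σ →₀ ℕ), (v.prod fun a e => x a ^ e) = ∏ a, x a ^ v a := by
      intro v
      rw [Finsupp.prod_pow]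
    rw [hprod, hprod]
    have hsplit : ∀ (v : σ →₀ ℕ), ∏ a, x a ^ v a
        = x i ^ v i * ∏ a ∈ Finset.univ.erase i, x a ^ v a :=
      fun v => (Finset.mul_prod_erase Finset.univ _ (Finset.mem_univ i)).symm
    rw [hsplit, hsplit]
    have he : ∀ a ∈ Finset.univ.erase i,
        x a ^ ((u - Finsupp.single i 1 : σ →₀ ℕ) a) = x a ^ u a := by
      intro a ha
      rw [Finsupp.tsub_apply, Finsupp.single_eq_of_ne' (Finset.ne_of_mem_erase ha).symm,
        Nat.sub_zero]
    rw [Finset.prod_congr rfl he]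
    have hi : (u - Finsupp.single i 1 : σ →₀ ℕ) i = u i - 1 := by
      rw [Finsupp.tsub_apply, Finsupp.single_eq_same]
    rw [hi]
    obtain ⟨k, hk⟩ : ∃ k, u i = k + 1 := ⟨u i - 1, by omega⟩
    rw [hk]
    simp only [Nat.add_sub_cancel]
    push_cast
    ring

lemma euler_eval {g : MvPolynomial σ ℝ} {m : ℕ} (hg : g.IsHomogeneous m) (x : σ → ℝ) :
    ∑ i, x i * eval x (pderiv i g) = (m : ℝ) * eval x g := by
  conv_lhs => rw [g.as_sum]
  conv_rhs => rw [g.as_sum]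
  simp only [map_sum, Finset.mul_sum]
  rw [Finset.sum_comm]
  refine Finset.sum_congr rfl fun u hu => ?_
  have hdeg : u.degree = m := by
    by_contra h
    exact (MvPolynomial.mem_support_iff.mp hu) (hg.coeff_eq_zero h)
  calc ∑ i, x i * eval x (pderiv i (monomial u (coeff u g)))
      = ∑ i, (u i : ℝ) * eval x (monomial u (coeff u g)) := by
        exact Finset.sum_congr rfl fun i _ => euler_monomial u (coeff u g) x i
    _ = (m : ℝ) * eval x (monomial u (coeff u g)) := by
        rw [← Finset.sum_mul, ← Nat.cast_sum, ← degree_eq_sum, hdeg]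

lemma isHomogeneous_pderiv {g : MvPolynomial σ ℝ} {m : ℕ} (hg : g.IsHomogeneous m) (i : σ) :
    (pderiv i g).IsHomogeneous (m - 1) := by
  conv_lhs => rw [g.as_sum]
  rw [map_sum]
  apply MvPolynomial.IsHomogeneous.sum
  intro u hu
  have hdeg : u.degree = m := by
    by_contra h
    exact (MvPolynomial.mem_support_iff.mp hu) (hg.coeff_eq_zero h)
  rw [pderiv_monomial]
  rcases Nat.eq_zero_or_pos (u i) with h0 | hpos
  · rw [h0]
    simp only [Nat.cast_zero, mul_zero, map_zero]
    exact isHomogeneous_zero _ _ _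
  · apply isHomogeneous_monomial
    rw [degree_eq_sum] at hdeg ⊢
    rw [← Finset.add_sum_erase _ _ (Finset.mem_univ i)] at hdeg ⊢
    have he : ∀ a ∈ Finset.univ.erase i,
        ((u - Finsupp.single i 1 : σ →₀ ℕ) a) = u a := by
      intro a ha
      rw [Finsupp.tsub_apply, Finsupp.single_eq_of_ne' (Finset.ne_of_mem_erase ha).symm,
        Nat.sub_zero]
    simp only [Finsupp.coe_tsub, Pi.sub_apply, Finsupp.single_eq_same]
    have h2 : ∑ a ∈ Finset.univ.erase i, (u a - (Finsupp.single i 1 : σ →₀ ℕ) a)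
        = ∑ a ∈ Finset.univ.erase i, u a := by
      refine Finset.sum_congr rfl fun a ha => ?_
      rw [Finsupp.single_eq_of_ne' (Finset.ne_of_mem_erase ha).symm, Nat.sub_zero]
    rw [h2]
    omega

lemma pderiv_eq_zero_of_isHomogeneous_zero {g : MvPolynomial σ ℝ}
    (hg : g.IsHomogeneous 0) (i : σ) : pderiv i g = 0 := by
  conv_lhs => rw [g.as_sum]
  rw [map_sum]
  apply Finset.sum_eq_zero
  intro u hu
  have hdeg : u.degree = 0 := by
    by_contra h
    exact (MvPolynomial.mem_support_iff.mp hu) (hg.coeff_eq_zero h)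
  have hui : u i = 0 := by
    rw [degree_eq_sum] at hdeg
    exact Finset.sum_eq_zero_iff.mp hdeg i (Finset.mem_univ i)
  rw [pderiv_monomial, hui]
  simp

end PolyLemmas

section LorentzLemmas

lemma gap_alg {α β s t P r : ℝ} (hs0 : 0 ≤ s) (ht0 : 0 ≤ t) (hrst : r ^ 2 ≤ s * t)
    (ha : 0 < α - s) (hβ0 : 0 ≤ β) (hPsq : P ^ 2 = α * β) (hbt : t < β) :
    (β - t) * (α - s) ≤ (P - r) ^ 2 := by
  set p := Real.sqrt (α * β) with hp
  set q := Real.sqrt (s * t) with hq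
  have hq0 : 0 ≤ q := Real.sqrt_nonneg _
  have hp0 : 0 ≤ p := Real.sqrt_nonneg _
  have hq2 : q ^ 2 = s * t := Real.sq_sqrt (mul_nonneg hs0 ht0)
  have hα0 : 0 < α := by linarith
  have hp2 : p ^ 2 = α * β := Real.sq_sqrt (mul_nonneg hα0.le hβ0)
  have habsP : |P| = p := by rw [hp, ← hPsq, Real.sqrt_sq_eq_abs]
  have habsr : |r| ≤ q := by
    have h := Real.sqrt_le_sqrt (hrst.trans_eq hq2.symm)
    rwa [Real.sqrt_sq_eq_abs, Real.sqrt_sq hq0] at h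
  clear_value p q
  clear hp hq
  have h1 : p - q ≤ |P - r| := by
    calc p - q ≤ |P| - |r| := by rw [habsP]; linarith [habsr]
      _ ≤ |P - r| := abs_sub_abs_le_abs_sub P r
  have h2 : (p - q) ^ 2 ≤ (P - r) ^ 2 := by
    have hpq : q ≤ p := by nlinarith
    rw [← sq_abs (P - r)]
    exact pow_le_pow_left₀ (by linarith) h1 2
  have h3 : 2 * p * q ≤ α * t + β * s := by
    nlinarith [sq_nonneg (α * t - β * s),
      mul_nonneg hp0 hq0, mul_nonneg hα0.le ht0, mul_nonneg hβ0 hs0]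
  nlinarith [h2, h3, hp2, hq2]

lemma key_cs {N : ℕ} (μ a b : Fin N → ℝ) (j0 : Fin N) (hneg : ∀ j, j ≠ j0 → μ j ≤ 0)
    (ha : 0 < ∑ j, μ j * a j ^ 2) :
    (∑ j, μ j * b j ^ 2) * (∑ j, μ j * a j ^ 2) ≤ (∑ j, μ j * a j * b j) ^ 2 := by
  classical
  set E := Finset.univ.erase j0 with hE
  set s := ∑ j ∈ E, (-μ j) * a j ^ 2 with hs
  set t := ∑ j ∈ E, (-μ j) * b j ^ 2 with ht
  set r := ∑ j ∈ E, (-μ j) * (a j * b j) with hr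
  have hmem : ∀ j ∈ E, 0 ≤ -μ j := fun j hj => by
    have := hneg j (Finset.ne_of_mem_erase hj); linarith
  have hs0 : 0 ≤ s := Finset.sum_nonneg fun j hj => mul_nonneg (hmem j hj) (sq_nonneg _)
  have ht0 : 0 ≤ t := Finset.sum_nonneg fun j hj => mul_nonneg (hmem j hj) (sq_nonneg _)
  have hrst : r ^ 2 ≤ s * t := by
    have h := Finset.sum_mul_sq_le_sq_mul_sq E
      (fun j => Real.sqrt (-μ j) * a j) (fun j => Real.sqrt (-μ j) * b j)
    have e1 : ∑ j ∈ E, (Real.sqrt (-μ j) * a j) * (Real.sqrt (-μ j) * b j) = r := by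
      refine Finset.sum_congr rfl fun j hj => ?_
      rw [show (Real.sqrt (-μ j) * a j) * (Real.sqrt (-μ j) * b j)
          = (Real.sqrt (-μ j) * Real.sqrt (-μ j)) * (a j * b j) by ring,
        Real.mul_self_sqrt (hmem j hj)]
    have e2 : ∑ j ∈ E, (Real.sqrt (-μ j) * a j) ^ 2 = s := by
      refine Finset.sum_congr rfl fun j hj => ?_
      rw [mul_pow, Real.sq_sqrt (hmem j hj)]
    have e3 : ∑ j ∈ E, (Real.sqrt (-μ j) * b j) ^ 2 = t := by
      refine Finset.sum_congr rfl fun j hj => ?_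
      rw [mul_pow, Real.sq_sqrt (hmem j hj)]
    rwa [e1, e2, e3] at h
  set α := μ j0 * a j0 ^ 2 with hα
  set β := μ j0 * b j0 ^ 2 with hβ
  set P := μ j0 * a j0 * b j0 with hP
  have hzA : s + ∑ j ∈ E, μ j * a j ^ 2 = 0 := by
    rw [hs, ← Finset.sum_add_distrib]; exact Finset.sum_eq_zero fun j _ => by ring
  have hzB : t + ∑ j ∈ E, μ j * b j ^ 2 = 0 := by
    rw [ht, ← Finset.sum_add_distrib]; exact Finset.sum_eq_zero fun j _ => by ring
  have hzP : r + ∑ j ∈ E, μ j * a j * b j = 0 := by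
    rw [hr, ← Finset.sum_add_distrib]
    exact Finset.sum_eq_zero fun j _ => by ring
  have hsumA : ∑ j, μ j * a j ^ 2 = α - s := by
    rw [← Finset.add_sum_erase _ _ (Finset.mem_univ j0), ← hE, ← hα]; linarith
  have hsumB : ∑ j, μ j * b j ^ 2 = β - t := by
    rw [← Finset.add_sum_erase _ _ (Finset.mem_univ j0), ← hE, ← hβ]; linarith
  have hsumP : ∑ j, μ j * a j * b j = P - r := by
    rw [← Finset.add_sum_erase _ _ (Finset.mem_univ j0), ← hE, ← hP]; linarith
  rw [hsumA] at ha
  rw [hsumA, hsumB, hsumP]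
  have hμ0 : 0 < μ j0 := by nlinarith [sq_nonneg (a j0)]
  have hβ0 : 0 ≤ β := mul_nonneg hμ0.le (sq_nonneg _)
  have hPsq : P ^ 2 = α * β := by rw [hα, hβ, hP]; ring
  clear_value s t r α β P
  rcases le_or_gt β t with hbt | hbt
  · calc (β - t) * (α - s) ≤ 0 := mul_nonpos_of_nonpos_of_nonneg (by linarith) (by linarith)
    _ ≤ (P - r) ^ 2 := sq_nonneg _
  · exact gap_alg hs0 ht0 hrst ha hβ0 hPsq hbt

lemma quad_form_eq {N : ℕ} {C : Matrix (Fin N) (Fin N) ℝ} (hC : C.IsHermitian)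
    (y z : Fin N → ℝ) :
    y ⬝ᵥ (C *ᵥ z) = ∑ jj, hC.eigenvalues jj *
      ((hC.eigenvectorUnitary : Matrix (Fin N) (Fin N) ℝ)ᵀ *ᵥ y) jj *
      ((hC.eigenvectorUnitary : Matrix (Fin N) (Fin N) ℝ)ᵀ *ᵥ z) jj := by
  set U := (hC.eigenvectorUnitary : Matrix (Fin N) (Fin N) ℝ) with hU
  have hsp : C = U * diagonal (RCLike.ofReal ∘ hC.eigenvalues) * star U := hC.spectral_theorem
  have hstar : star U = Uᵀ := rfl
  conv_lhs => rw [hsp, hstar]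
  rw [← mulVec_mulVec, ← mulVec_mulVec, dotProduct_mulVec, ← mulVec_transpose]
  rw [dotProduct]
  refine Finset.sum_congr rfl fun jj _ => ?_
  rw [mulVec_diagonal]
  show (Uᵀ *ᵥ y) jj * (RCLike.ofReal (hC.eigenvalues jj) * (Uᵀ *ᵥ z) jj) = _
  norm_num
  ring

lemma lorentz {N : ℕ} {C : Matrix (Fin N) (Fin N) ℝ} (hC : C.IsHermitian)
    (h1 : (Finset.univ.filter fun j => 0 < hC.eigenvalues j).card = 1)
    (a w : Fin N → ℝ) (ha : 0 < a ⬝ᵥ (C *ᵥ a)) :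
    (w ⬝ᵥ (C *ᵥ w)) * (a ⬝ᵥ (C *ᵥ a)) ≤ (a ⬝ᵥ (C *ᵥ w)) ^ 2 := by
  classical
  obtain ⟨j0, hj0⟩ := Finset.card_eq_one.mp h1
  have hneg : ∀ jj, jj ≠ j0 → hC.eigenvalues jj ≤ 0 := by
    intro jj hjj
    by_contra hpos
    have hmem : jj ∈ Finset.univ.filter fun j => 0 < hC.eigenvalues j :=
      Finset.mem_filter.mpr ⟨Finset.mem_univ _, not_le.mp hpos⟩
    rw [hj0] at hmem
    exact hjj (Finset.mem_singleton.mp hmem)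
  set U := (hC.eigenvectorUnitary : Matrix (Fin N) (Fin N) ℝ) with hU
  set a' := Uᵀ *ᵥ a with ha'
  set w' := Uᵀ *ᵥ w with hw'
  have haa : a ⬝ᵥ (C *ᵥ a) = ∑ jj, hC.eigenvalues jj * a' jj ^ 2 := by
    rw [quad_form_eq hC a a]
    exact Finset.sum_congr rfl fun jj _ => by rw [← hU, ← ha']; ring
  have hww : w ⬝ᵥ (C *ᵥ w) = ∑ jj, hC.eigenvalues jj * w' jj ^ 2 := by
    rw [quad_form_eq hC w w]
    exact Finset.sum_congr rfl fun jj _ => by rw [← hU, ← hw']; ring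
  have haw : a ⬝ᵥ (C *ᵥ w) = ∑ jj, hC.eigenvalues jj * a' jj * w' jj := by
    rw [quad_form_eq hC a w]
  rw [haa] at ha
  rw [haa, hww, haw]
  exact key_cs _ _ _ j0 hneg ha

/-- Symmetric dot-product manipulation. -/
lemma dot_mulVec_eq {N : ℕ} (M : Matrix (Fin N) (Fin N) ℝ) (hM : ∀ k l, M k l = M l k)
    (v w : Fin N → ℝ) : v ⬝ᵥ (M *ᵥ w) = ∑ l, (M *ᵥ v) l * w l := by
  simp only [dotProduct, mulVec, Finset.mul_sum, Finset.sum_mul]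
  rw [Finset.sum_comm]
  exact Finset.sum_congr rfl fun l _ => Finset.sum_congr rfl fun k _ => by rw [hM k l]; ring

end LorentzLemmas

lemma eigenvalues_of_zero_matrix {N : ℕ} {M : Matrix (Fin N) (Fin N) ℝ} (hM : M = 0)
    (h : M.IsHermitian) (k : Fin N) : h.eigenvalues k = 0 := by
  subst hM
  have h2 := h.eigenvalues_eq k
  simpa using h2

theorem no_eigenvalue_in_gap {n d : ℕ} (hd : 2 ≤ d)
    (f : MvPolynomial (Fin n) ℝ) (hf : f.IsHomogeneous d)
    (x : Fin n → ℝ) (hx : ∀ i, 0 < x i)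
    (hgrad : ∀ i, 0 < gradAt f x i)
    (h1 : ∀ (i : Fin n) (hHi : (hessAt (MvPolynomial.pderiv i f) x).IsHermitian),
      (Finset.univ.filter fun j => 0 < hHi.eigenvalues j).card = 1)
    (hB : (Matrix.diagonal (fun i => Real.sqrt (x i / gradAt f x i)) * hessAt f x *
      Matrix.diagonal (fun i => Real.sqrt (x i / gradAt f x i))).IsHermitian) :
    ∀ j : Fin n, 0 ≤ hB.eigenvalues j * (hB.eigenvalues j - ((d : ℝ) - 1)) := by
  classical
  intro j
  have hdR : (2:ℝ) ≤ (d:ℝ) := by exact_mod_cast hd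
  rcases le_or_gt (hB.eigenvalues j) 0 with hle | hpos
  · nlinarith [hle, hdR]
  rcases le_or_gt ((d:ℝ) - 1) (hB.eigenvalues j) with hge | hlt
  · exact mul_nonneg hpos.le (by linarith)
  exfalso
  set lam := hB.eigenvalues j with hlam
  rcases eq_or_lt_of_le hd with hd2 | hd3
  · -- d = 2 : each Hessian of ∂ᵢf is the zero matrix, contradicting h1
    have hzero : hessAt (MvPolynomial.pderiv j f) x = 0 := by
      ext a b
      simp only [Matrix.zero_apply]
      show eval x (pderiv a (pderiv b (pderiv j f))) = 0
      have hh : (pderiv b (pderiv j f)).IsHomogeneous (d - 1 - 1) :=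
        isHomogeneous_pderiv (isHomogeneous_pderiv hf j) b
      have he : d - 1 - 1 = 0 := by omega
      rw [he] at hh
      rw [pderiv_eq_zero_of_isHomogeneous_zero hh a, map_zero]
    have hH0 : (hessAt (MvPolynomial.pderiv j f) x).IsHermitian := by
      rw [hzero]; exact isHermitian_zero
    obtain ⟨j0, hj0⟩ := Finset.card_eq_one.mp (h1 j hH0)
    have hj0mem : j0 ∈ Finset.univ.filter fun jj => 0 < hH0.eigenvalues jj := by
      rw [hj0]; exact Finset.mem_singleton_self j0
    have hj0pos : 0 < hH0.eigenvalues j0 := (Finset.mem_filter.mp hj0mem).2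
    rw [eigenvalues_of_zero_matrix hzero hH0 j0] at hj0pos
    exact lt_irrefl 0 hj0pos
  · -- 2 < d
    have hd3' : 3 ≤ d := hd3
    have hdR3 : (3:ℝ) ≤ (d:ℝ) := by exact_mod_cast hd3'
    have hd2pos : (0:ℝ) < (d:ℝ) - 2 := by linarith
    have hd1pos : (0:ℝ) < (d:ℝ) - 1 := by linarith
    set sd : Fin n → ℝ := fun i => Real.sqrt (x i / gradAt f x i) with hsd
    have hsdpos : ∀ i, 0 < sd i := fun i => Real.sqrt_pos.mpr (div_pos (hx i) (hgrad i))
    have hsdsq : ∀ i, gradAt f x i * sd i ^ 2 = x i := by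
      intro i
      have h0 : sd i ^ 2 = x i / gradAt f x i :=
        Real.sq_sqrt (div_nonneg (hx i).le (hgrad i).le)
      rw [h0, mul_comm, div_mul_cancel₀ _ (hgrad i).ne']
    set u : Fin n → ℝ := ⇑(hB.eigenvectorBasis j) with hu
    set w : Fin n → ℝ := fun i => sd i * u i with hw
    have hDu : Matrix.diagonal sd *ᵥ u = w := by
      funext i
      rw [mulVec_diagonal, hw]
    have hBu : Matrix.diagonal sd *ᵥ (hessAt f x *ᵥ w) = lam • u := by
      have h := hB.mulVec_eigenvectorBasis j
      rw [← mulVec_mulVec, ← mulVec_mulVec, hDu] at h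
      exact h
    have hkey : ∀ i, sd i * ((hessAt f x *ᵥ w) i) = lam * u i := by
      intro i
      have h := congrFun hBu i
      rwa [mulVec_diagonal, Pi.smul_apply, smul_eq_mul] at h
    have hAsymm : ∀ k l, hessAt f x k l = hessAt f x l k := fun k l => by
      show eval x (pderiv k (pderiv l f)) = eval x (pderiv l (pderiv k f))
      rw [pderiv_pderiv_comm]
    have hc1 : ((d - 1 : ℕ) : ℝ) = (d:ℝ) - 1 := by
      have h : 1 ≤ d := by omega
      push_cast [h]
      ring
    have hc2 : ((d - 1 - 1 : ℕ) : ℝ) = (d:ℝ) - 2 := by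
      have h : d - 1 - 1 = d - 2 := by omega
      rw [h]
      have h2 : 2 ≤ d := hd
      push_cast [h2]
      ring
    have hmvapp : ∀ (M : Matrix (Fin n) (Fin n) ℝ) (v : Fin n → ℝ) (i : Fin n),
        (M *ᵥ v) i = ∑ k, M i k * v k := by
      intro M v i
      simp [mulVec, dotProduct]
    have hAx : ∀ i, (hessAt f x *ᵥ x) i = ((d:ℝ) - 1) * gradAt f x i := by
      intro i
      rw [hmvapp]
      calc ∑ k, hessAt f x i k * x k
          = ∑ k, x k * eval x (pderiv k (pderiv i f)) := by
            refine Finset.sum_congr rfl fun k _ => ?_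
            rw [hAsymm i k]
            show eval x (pderiv k (pderiv i f)) * x k = _
            ring
        _ = ((d - 1 : ℕ):ℝ) * eval x (pderiv i f) := euler_eval (isHomogeneous_pderiv hf i) x
        _ = ((d:ℝ) - 1) * gradAt f x i := by rw [hc1]; rfl
    set C : Fin n → Matrix (Fin n) (Fin n) ℝ := fun i => hessAt (MvPolynomial.pderiv i f) x
      with hCdef
    have hCsymm : ∀ i k l, C i k l = C i l k := fun i k l => by
      show eval x (pderiv k (pderiv l (pderiv i f))) = eval x (pderiv l (pderiv k (pderiv i f)))
      rw [pderiv_pderiv_comm]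
    have hCherm : ∀ i, (C i).IsHermitian := by
      intro i
      show (C i)ᴴ = C i
      ext k l
      rw [conjTranspose_apply, star_trivial]
      exact hCsymm i l k
    have hCx : ∀ i k, (C i *ᵥ x) k = ((d:ℝ) - 2) * hessAt f x k i := by
      intro i k
      rw [hmvapp]
      calc ∑ l, C i k l * x l
          = ∑ l, x l * eval x (pderiv l (pderiv k (pderiv i f))) := by
            refine Finset.sum_congr rfl fun l _ => ?_
            show eval x (pderiv k (pderiv l (pderiv i f))) * x l = _
            rw [pderiv_pderiv_comm k l (pderiv i f)]
            ring
        _ = ((d - 1 - 1 : ℕ):ℝ) * eval x (pderiv k (pderiv i f)) :=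
            euler_eval (isHomogeneous_pderiv (isHomogeneous_pderiv hf i) k) x
        _ = ((d:ℝ) - 2) * hessAt f x k i := by rw [hc2]; rfl
    have hsumC : ∀ k l, ∑ i, x i * C i k l = ((d:ℝ) - 2) * hessAt f x k l := by
      intro k l
      calc ∑ i, x i * C i k l
          = ∑ i, x i * eval x (pderiv i (pderiv k (pderiv l f))) := by
            refine Finset.sum_congr rfl fun i _ => ?_
            congr 1
            show eval x (pderiv k (pderiv l (pderiv i f))) = _
            rw [pderiv_pderiv_comm l i f, pderiv_pderiv_comm k i (pderiv l f)]
        _ = ((d - 1 - 1 : ℕ):ℝ) * eval x (pderiv k (pderiv l f)) :=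
            euler_eval (isHomogeneous_pderiv (isHomogeneous_pderiv hf l) k) x
        _ = ((d:ℝ) - 2) * hessAt f x k l := by rw [hc2]; rfl
    have hx_dot_Cx : ∀ i, x ⬝ᵥ (C i *ᵥ x) = ((d:ℝ)-2) * (((d:ℝ)-1) * gradAt f x i) := by
      intro i
      rw [dotProduct]
      calc ∑ k, x k * (C i *ᵥ x) k
          = ∑ k, ((d:ℝ)-2) * (hessAt f x i k * x k) := by
            refine Finset.sum_congr rfl fun k _ => ?_
            rw [hCx i k, hAsymm k i]
            ring
        _ = ((d:ℝ)-2) * ∑ k, hessAt f x i k * x k := by rw [Finset.mul_sum]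
        _ = ((d:ℝ)-2) * ((hessAt f x *ᵥ x) i) := by rw [hmvapp]
        _ = ((d:ℝ)-2) * (((d:ℝ)-1) * gradAt f x i) := by rw [hAx i]
    have hx_dot_Cx_pos : ∀ i, 0 < x ⬝ᵥ (C i *ᵥ x) := by
      intro i
      rw [hx_dot_Cx i]
      exact mul_pos hd2pos (mul_pos hd1pos (hgrad i))
    have hsd_x_Cw : ∀ i, sd i * (x ⬝ᵥ (C i *ᵥ w)) = ((d:ℝ)-2) * (lam * u i) := by
      intro i
      rw [dot_mulVec_eq (C i) (hCsymm i) x w]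
      have h6 : ∑ l, (C i *ᵥ x) l * w l = ((d:ℝ)-2) * ((hessAt f x *ᵥ w) i) := by
        rw [hmvapp (hessAt f x) w i, Finset.mul_sum]
        refine Finset.sum_congr rfl fun l _ => ?_
        rw [hCx i l, hAsymm i l]
        ring
      rw [h6, show sd i * (((d:ℝ)-2) * ((hessAt f x *ᵥ w) i))
          = ((d:ℝ)-2) * (sd i * ((hessAt f x *ᵥ w) i)) from by ring, hkey i]
    have hwAw : w ⬝ᵥ (hessAt f x *ᵥ w) = lam * ∑ i, u i ^ 2 := by
      rw [dotProduct, Finset.mul_sum]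
      refine Finset.sum_congr rfl fun i _ => ?_
      have hwi : w i = sd i * u i := by rw [hw]
      calc w i * ((hessAt f x *ᵥ w) i)
          = u i * (sd i * ((hessAt f x *ᵥ w) i)) := by rw [hwi]; ring
        _ = u i * (lam * u i) := by rw [hkey i]
        _ = lam * u i ^ 2 := by ring
    have hquadW : ∑ i, x i * (w ⬝ᵥ (C i *ᵥ w)) = ((d:ℝ)-2) * (w ⬝ᵥ (hessAt f x *ᵥ w)) := by
      have hexp : ∀ (M : Matrix (Fin n) (Fin n) ℝ),
          w ⬝ᵥ (M *ᵥ w) = ∑ k, ∑ l, w k * (M k l * w l) := by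
        intro M
        rw [dotProduct]
        refine Finset.sum_congr rfl fun k _ => ?_
        rw [hmvapp, Finset.mul_sum]
      calc ∑ i, x i * (w ⬝ᵥ (C i *ᵥ w))
          = ∑ i, ∑ k, ∑ l, x i * (w k * (C i k l * w l)) := by
            refine Finset.sum_congr rfl fun i _ => ?_
            rw [hexp (C i), Finset.mul_sum]
            refine Finset.sum_congr rfl fun k _ => ?_
            rw [Finset.mul_sum]
        _ = ∑ k, ∑ i, ∑ l, x i * (w k * (C i k l * w l)) := Finset.sum_comm
        _ = ∑ k, ∑ l, ∑ i, x i * (w k * (C i k l * w l)) := by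
            exact Finset.sum_congr rfl fun k _ => Finset.sum_comm
        _ = ∑ k, ∑ l, w k * (w l * (((d:ℝ)-2) * hessAt f x k l)) := by
            refine Finset.sum_congr rfl fun k _ => Finset.sum_congr rfl fun l _ => ?_
            have hstep : ∑ i, x i * (w k * (C i k l * w l))
                = w k * w l * ∑ i, x i * C i k l := by
              rw [Finset.mul_sum]
              exact Finset.sum_congr rfl fun i _ => by ring
            rw [hstep, hsumC k l]
            ring
        _ = ((d:ℝ)-2) * (w ⬝ᵥ (hessAt f x *ᵥ w)) := by
            rw [hexp (hessAt f x), Finset.mul_sum]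
            refine Finset.sum_congr rfl fun k _ => ?_
            rw [Finset.mul_sum]
            exact Finset.sum_congr rfl fun l _ => by ring
    -- positivity of S
    have hune : ∃ i, u i ≠ 0 := by
      by_contra hcon
      push_neg at hcon
      have : hB.eigenvectorBasis j = 0 := by
        apply PiLp.ext
        intro i
        exact hcon i
      exact hB.eigenvectorBasis.orthonormal.ne_zero j this
    obtain ⟨i0, hi0⟩ := hune
    have hS : 0 < ∑ i, u i ^ 2 :=
      Finset.sum_pos' (fun i _ => sq_nonneg _) ⟨i0, Finset.mem_univ _, by positivity⟩
    -- per-i bound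
    have hper : ∀ i ∈ Finset.univ (α := Fin n), x i * (w ⬝ᵥ (C i *ᵥ w))
        ≤ (((d:ℝ)-2) * lam^2 / ((d:ℝ)-1)) * u i ^ 2 := by
      intro i _
      have hLor := lorentz (hCherm i) (h1 i (hCherm i)) x w (hx_dot_Cx_pos i)
      have hKpos : 0 < ((d:ℝ)-2) * (((d:ℝ)-1) * gradAt f x i) :=
        mul_pos hd2pos (mul_pos hd1pos (hgrad i))
      have h5 : (x i * (w ⬝ᵥ (C i *ᵥ w))) * (x ⬝ᵥ (C i *ᵥ x))
          ≤ gradAt f x i * (((d:ℝ)-2) * (lam * u i))^2 := by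
        calc (x i * (w ⬝ᵥ (C i *ᵥ w))) * (x ⬝ᵥ (C i *ᵥ x))
            = x i * ((w ⬝ᵥ (C i *ᵥ w)) * (x ⬝ᵥ (C i *ᵥ x))) := by ring
          _ ≤ x i * (x ⬝ᵥ (C i *ᵥ w))^2 := mul_le_mul_of_nonneg_left hLor (hx i).le
          _ = (gradAt f x i * sd i ^ 2) * (x ⬝ᵥ (C i *ᵥ w))^2 := by rw [hsdsq i]
          _ = gradAt f x i * (sd i * (x ⬝ᵥ (C i *ᵥ w)))^2 := by ring
          _ = gradAt f x i * (((d:ℝ)-2) * (lam * u i))^2 := by rw [hsd_x_Cw i]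
      rw [hx_dot_Cx i] at h5
      have hgeq : (((d:ℝ)-2) * lam^2 / ((d:ℝ)-1) * u i ^ 2) * (((d:ℝ)-2) * (((d:ℝ)-1) * gradAt f x i))
          = gradAt f x i * (((d:ℝ)-2) * (lam * u i))^2 := by
        field_simp
      exact le_of_mul_le_mul_right (h5.trans_eq hgeq.symm) hKpos
    have hsum := Finset.sum_le_sum hper
    rw [hquadW, hwAw, ← Finset.mul_sum] at hsum
    -- hsum : (d-2) * (lam * S) ≤ ((d-2)*lam^2/(d-1)) * S
    set S := ∑ i, u i ^ 2 with hSdef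
    have h9 : ((d:ℝ)-1) * (((d:ℝ)-2) * (lam * S))
        ≤ ((d:ℝ)-1) * ((((d:ℝ)-2) * lam^2 / ((d:ℝ)-1)) * S) :=
      mul_le_mul_of_nonneg_left hsum hd1pos.le
    have h10 : ((d:ℝ)-1) * ((((d:ℝ)-2) * lam^2 / ((d:ℝ)-1)) * S) = ((d:ℝ)-2) * lam^2 * S := by
      field_simp
    rw [h10] at h9
    nlinarith [mul_pos (mul_pos hd2pos hpos) hS]
end
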